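/- arXiv:1403.0536 — 10 statements merged into one kernel-verified Lean document; each statement's English description precedes it below -/
import Mathlib

section
/- Given a commutative square of categories and functors in which both horizontal functors are surjective equivalences, if the left vertical functor is an isofibration then so is the right vertical functor. -/
open CategoryTheory CategoryTheory.Limits CategoryTheory.Functor

universe w₁ w₂ w₃ w₄ v₁ v₂ v₃ v₄

namespace PaperStacks

/-- A functor `p : A ⥤ B` is an isofibration if every isomorphism `f : p.obj a ≅ b` in `B`
lifts to an isomorphism `e : a ≅ a'` in `A` with `p.obj a' = b` and `p.map e.hom = f.hom`
(up to the identification `p.obj a' = b`). -/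
def IsIsofibration {A : Type w₁} {B : Type w₂} [Category.{v₁} A] [Category.{v₂} B]
    (p : A ⥤ B) : Prop :=
  ∀ (a : A) (b : B) (f : p.obj a ≅ b), ∃ (a' : A) (e : a ≅ a') (h : p.obj a' = b),
    p.map e.hom = f.hom ≫ eqToHom h.symm

/-- A surjective equivalence: an equivalence of categories that is surjective on objects. -/
def IsSurjectiveEquivalence {A : Type w₁} {B : Type w₂} [Category.{v₁} A] [Category.{v₂} B]
    (p : A ⥤ B) : Prop :=
  p.IsEquivalence ∧ Function.Surjective p.obj

/-- In a commutative square of categories whose horizontal functors are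
surjective equivalences, if the left vertical functor is an isofibration then so is
the right vertical functor. -/
theorem isIsofibration_of_commSq_surjective_equivalences
    {A : Type w₁} {B : Type w₂} {C : Type w₃} {D : Type w₄}
    [Category.{v₁} A] [Category.{v₂} B] [Category.{v₃} C] [Category.{v₄} D]
    (top : A ⥤ C) (bot : B ⥤ D) (f : A ⥤ B) (g : C ⥤ D)
    (hsq : f ⋙ bot = top ⋙ g)
    (htop : IsSurjectiveEquivalence top) (hbot : IsSurjectiveEquivalence bot)
    (hf : IsIsofibration f) :
    IsIsofibration g := by
  intro c d φ
  obtain ⟨a, ha⟩ := htop.2 c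
  obtain ⟨b, hb⟩ := hbot.2 d
  haveI := htop.1
  haveI := hbot.1
  have h1 : bot.obj (f.obj a) = g.obj c := by
    have := Functor.congr_obj hsq a
    simpa [ha] using this
  let ψ : f.obj a ≅ b := bot.preimageIso (eqToIso h1 ≪≫ φ ≪≫ eqToIso hb.symm)
  obtain ⟨a', e, h, he⟩ := hf a b ψ
  have hobj : g.obj (top.obj a') = d := by
    have := Functor.congr_obj hsq a'
    simp only [Functor.comp_obj] at this
    rw [← this, h, hb]
  refine ⟨top.obj a', eqToIso ha.symm ≪≫ top.mapIso e, hobj, ?_⟩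
  have hmap := Functor.congr_hom hsq e.hom
  simp only [Functor.comp_map] at hmap
  have hψ : bot.map ψ.hom = eqToHom h1 ≫ φ.hom ≫ eqToHom hb.symm := by
    simp [ψ]
  rw [he, Functor.map_comp, hψ] at hmap
  simp only [eqToHom_map, Category.assoc] at hmap
  simp only [eqToHom_trans, eqToHom_trans_assoc, comp_eqToHom_iff, eqToHom_comp_iff,
    Category.assoc] at hmap
  simp [Functor.map_comp, eqToHom_map, hmap]

end PaperStacks
end

section
/- Let E be a category with functors f : F ⥤ E and g : G ⥤ E, and let u : F ⥤ G be a functor over E (g ∘ u = f) such that f is an isofibration. Then the underlying functor of u is an isofibration if and only if for every object S of E, the induced functor on fibre categories F_S ⥤ G_S is an isofibration. -/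
/-!
A vertical isomorphism in a fibre of `g` lifts along `u` to an isomorphism that `f = u ⋙ g` sends
to an identity, i.e. to an isomorphism in the fibre of `f`. Conversely, to lift `φ : u a ≅ b` along `u`, first lift `g φ` along the isofibration
`f` to some `e₁ : a ≅ a₁`; since `u e₁` and `φ` lie over the same isomorphism, `(u e₁)⁻¹ ≫ φ` is
vertical, so it lifts in the fibre over `g b`, and composing that lift with `e₁` lifts `φ`.
-/

open CategoryTheory CategoryTheory.Limits CategoryTheory.Functor

universe w₁ w₂ w₃ w₄ v₁ v₂ v₃ v₄

namespace PaperStacks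

/-- The functor induced on fibre categories by a functor `u : F ⥤ G` over `E`. -/
def fiberMap {E : Type w₁} {F : Type w₂} {G : Type w₃}
    [Category.{v₁} E] [Category.{v₂} F] [Category.{v₃} G]
    {p : F ⥤ E} {q : G ⥤ E} (u : F ⥤ G) (h : u ⋙ q = p) (S : E) :
    Functor.Fiber p S ⥤ Functor.Fiber q S :=
  Functor.Fiber.inducedFunctor (F := Functor.Fiber.fiberInclusion ⋙ u)
    (by rw [Functor.assoc, h]; exact Functor.Fiber.fiberInclusion_comp_eq_const)

section Lifts

variable {A : Type w₁} {B : Type w₂} {C : Type w₃}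
  [Category.{v₁} A] [Category.{v₂} B] [Category.{v₃} C]

lemma isIsofibration_iff_exists_isHomLift (p : A ⥤ B) :
    IsIsofibration p ↔
      ∀ (a : A) (b : B) (f : p.obj a ≅ b), ∃ (a' : A) (e : a ≅ a'), p.IsHomLift f.hom e.hom := by
  refine forall₃_congr fun a b f => exists_congr fun a' => ⟨?_, ?_⟩
  · rintro ⟨e, h, he⟩
    exact ⟨e, IsHomLift.of_fac' p f.hom e.hom rfl h (by simpa using he)⟩
  · rintro ⟨e, he⟩
    exact ⟨e, IsHomLift.codomain_eq p f.hom e.hom, by simpa using IsHomLift.fac' p f.hom e.hom⟩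

lemma isHomLift_comp_iff (u : A ⥤ B) (g : B ⥤ C) {R S : C} (s : R ⟶ S) {a a' : A} (e : a ⟶ a') :
    (u ⋙ g).IsHomLift s e ↔ g.IsHomLift s (u.map e) :=
  ⟨fun _ => IsHomLift.of_fac' g s _ (IsHomLift.domain_eq (u ⋙ g) s e)
      (IsHomLift.codomain_eq (u ⋙ g) s e) (IsHomLift.fac' (u ⋙ g) s e),
    fun _ => IsHomLift.of_fac' (u ⋙ g) s e (IsHomLift.domain_eq g s (u.map e))
      (IsHomLift.codomain_eq g s (u.map e)) (IsHomLift.fac' g s (u.map e))⟩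

lemma isHomLift_comp_of_isHomLift {u : A ⥤ B} {g : B ⥤ C} {R S : C} {s : R ⟶ S} {b b' : B}
    {φ : b ⟶ b'} {a a' : A} {e : a ⟶ a'} (he : u.IsHomLift φ e) (hφ : g.IsHomLift s φ) :
    (u ⋙ g).IsHomLift s e := by
  obtain ⟨⟩ := he
  exact (isHomLift_comp_iff u g s e).2 hφ

lemma isHomLift_comp_map_iff (w : A ⥤ B) (J : B ⥤ C) [J.Faithful] (hJ : J.obj.Injective)
    {b b' : B} (ψ : b ⟶ b') {a a' : A} (χ : a ⟶ a') :
    w.IsHomLift ψ χ ↔ (w ⋙ J).IsHomLift (J.map ψ) χ := by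
  refine ⟨fun _ => ?_, fun _ => ?_⟩
  · subst_hom_lift w ψ χ
    exact IsHomLift.map (w ⋙ J) χ
  · obtain rfl : w.obj a = b := hJ (IsHomLift.domain_eq (w ⋙ J) (J.map ψ) χ)
    obtain rfl : w.obj a' = b' := hJ (IsHomLift.codomain_eq (w ⋙ J) (J.map ψ) χ)
    obtain rfl : w.map χ = ψ := J.map_injective (by simpa using IsHomLift.fac' (w ⋙ J) (J.map ψ) χ)
    infer_instance

lemma isHomLift_id_inv_comp (p : A ⥤ B) {R S : B} (f : R ≅ S) {a b c : A} (φ : a ≅ b)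
    (ψ : a ⟶ c) [p.IsHomLift f.hom φ.hom] [p.IsHomLift f.hom ψ] :
    p.IsHomLift (𝟙 S) (φ.inv ≫ ψ) := by
  simpa using IsHomLift.comp p f.inv f.hom φ.inv ψ

end Lifts

section Fibers

variable {E : Type w₁} {F : Type w₂} {G : Type w₃}
  [Category.{v₁} E] [Category.{v₂} F] [Category.{v₃} G]

def fiberIsoMk {p : F ⥤ E} {S : E} {a b : Fiber p S} (e : a.1 ≅ b.1)
    (he : p.IsHomLift (𝟙 S) e.hom) : a ≅ b where
  hom := ⟨e.hom, he⟩
  inv := ⟨e.inv, IsHomLift.lift_id_inv p S e⟩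
  hom_inv_id := Fiber.hom_ext e.hom_inv_id
  inv_hom_id := Fiber.hom_ext e.inv_hom_id

lemma isHomLift_fiberMap_iff {p : F ⥤ E} {q : G ⥤ E} (u : F ⥤ G) (h : u ⋙ q = p) {S : E}
    {b b' : Fiber q S} (ψ : b ⟶ b') {a a' : Fiber p S} (χ : a ⟶ a') :
    (fiberMap u h S).IsHomLift ψ χ ↔ u.IsHomLift ψ.1 χ.1 :=
  (isHomLift_comp_map_iff _ _ Fiber.fiberInclusion_obj_inj ψ χ).trans
    (isHomLift_comp_iff Fiber.fiberInclusion u _ χ)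

lemma IsIsofibration.fiberMap {f : F ⥤ E} {g : G ⥤ E} {u : F ⥤ G} (hu : u ⋙ g = f)
    (h : IsIsofibration u) (S : E) : IsIsofibration (fiberMap u hu S) := by
  subst hu
  rw [isIsofibration_iff_exists_isHomLift] at h ⊢
  intro a b φ
  obtain ⟨a', e, he⟩ := h a.1 b.1 (Fiber.fiberInclusion.mapIso φ)
  have he' : (u ⋙ g).IsHomLift (𝟙 S) e.hom := isHomLift_comp_of_isHomLift he φ.hom.2
  exact ⟨Fiber.mk (IsHomLift.codomain_eq _ (𝟙 S) e.hom), fiberIsoMk e he',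
    (isHomLift_fiberMap_iff u rfl _ _).2 he⟩

lemma isIsofibration_of_fiberMap {f : F ⥤ E} {g : G ⥤ E} {u : F ⥤ G} (hu : u ⋙ g = f)
    (hf : IsIsofibration f) (h : ∀ S : E, IsIsofibration (fiberMap u hu S)) :
    IsIsofibration u := by
  subst hu
  simp only [isIsofibration_iff_exists_isHomLift] at hf h ⊢
  intro a b φ
  obtain ⟨a₁, e₁, he₁⟩ := hf a (g.obj b) (g.mapIso φ)
  have : g.IsHomLift (g.mapIso φ).hom (u.mapIso e₁).hom := (isHomLift_comp_iff u g _ _).1 he₁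
  have : g.IsHomLift (g.mapIso φ).hom φ.hom := IsHomLift.map g φ.hom
  let χ : u.obj a₁ ≅ b := (u.mapIso e₁).symm ≪≫ φ
  have hχ : g.IsHomLift (𝟙 (g.obj b)) χ.hom := isHomLift_id_inv_comp g (g.mapIso φ) _ _
  obtain ⟨a', e₂, he₂⟩ := h (g.obj b)
    (Fiber.mk (IsHomLift.codomain_eq _ (g.mapIso φ).hom e₁.hom)) (Fiber.mk rfl) (fiberIsoMk χ hχ)
  let e₂' : a₁ ≅ a'.1 := Fiber.fiberInclusion.mapIso e₂
  have : u.IsHomLift χ.hom e₂'.hom := (isHomLift_fiberMap_iff u rfl _ _).1 he₂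
  refine ⟨a'.1, e₁ ≪≫ e₂', ?_⟩
  simpa [χ] using IsHomLift.comp u (u.map e₁.hom) χ.hom e₁.hom e₂'.hom

end Fibers

/-- Given `f : F ⥤ E` an isofibration, `g : G ⥤ E` and `u : F ⥤ G` over `E`,
the functor `u` is an isofibration if and only if all induced functors on fibre categories
are isofibrations. -/
theorem isIsofibration_iff_fiberwise_isIsofibration
    {E : Type w₁} {F : Type w₂} {G : Type w₃}
    [Category.{v₁} E] [Category.{v₂} F] [Category.{v₃} G]
    {f : F ⥤ E} {g : G ⥤ E} (u : F ⥤ G) (hu : u ⋙ g = f)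
    (hf : IsIsofibration f) :
    IsIsofibration u ↔ ∀ S : E, IsIsofibration (fiberMap u hu S) :=
  ⟨fun h S => h.fiberMap hu S, isIsofibration_of_fiberMap hu hf⟩

end PaperStacks
end

section
/- In a generalized model category, the class of weak equivalences is closed under retracts. -/
open CategoryTheory CategoryTheory.Limits CategoryTheory.Functor

universe w₁ w₂ w₃ w₄ v₁ v₂ v₃ v₄

namespace PaperStacks

variable {M : Type w₁} [Category.{v₁} M]

/-- `(L, R)` is a weak factorization system. -/
structure IsWFS (L R : MorphismProperty M) : Prop where
  llp : ∀ ⦃X Y : M⦄ (f : X ⟶ Y),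
    L f ↔ ∀ ⦃Z T : M⦄ (g : Z ⟶ T), R g → HasLiftingProperty f g
  rlp : ∀ ⦃X Y : M⦄ (g : X ⟶ Y),
    R g ↔ ∀ ⦃Z T : M⦄ (f : Z ⟶ T), L f → HasLiftingProperty f g
  fact : ∀ ⦃X Y : M⦄ (f : X ⟶ Y),
    ∃ (Z : M) (i : X ⟶ Z) (p : Z ⟶ Y), L i ∧ R p ∧ i ≫ p = f

/-- `(W, C, F)` is a generalized model category structure on `M`. -/
structure IsGMC (W C F : MorphismProperty M) : Prop where
  hasInitial : HasInitial M
  hasTerminal : HasTerminal M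
  pushoutCof : ∀ ⦃X Y Z : M⦄ (f : X ⟶ Y) (g : X ⟶ Z), C f → HasPushout f g
  pullbackFib : ∀ ⦃X Y Z : M⦄ (f : X ⟶ Y) (g : Z ⟶ Y), F f → HasPullback g f
  twoOutOfThree : W.HasTwoOutOfThreeProperty
  wfs₁ : IsWFS C (F ⊓ W)
  wfs₂ : IsWFS (C ⊓ W) F

/-- An object is fibrant if its map to the terminal object is a fibration. -/
def Fibrant (F : MorphismProperty M) (X : M) : Prop :=
  ∃ (T : M) (h : IsTerminal T), F (h.from X)

/-- An object is cofibrant if the map to it from the initial object is a cofibration. -/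
def Cofibrant (C : MorphismProperty M) (A : M) : Prop :=
  ∃ (I : M) (h : IsInitial I), C (h.to A)

/-!
First suppose `f` is a fibration. Factor `g = i' ≫ p` with `i'` a trivial cofibration and `p` a
fibration, so `p` is a trivial fibration by two-out-of-three. Lifting `i'` against `f` exhibits
`f` as a retract of `p`, and trivial fibrations, being defined by a right lifting property, are
closed under retracts.

In general, factor `f = j' ≫ q` with `j'` a trivial cofibration and `q` a fibration. Pushing `j'`
out along the section `X ⟶ Z` of the retract gives a trivial cofibration `b` and a map `k` with
`b ≫ k = g`, so `k` is a weak equivalence, and `q` is a retract of `k`. By the first case `q` is a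
weak equivalence, hence so is `f = j' ≫ q`.
-/

open MorphismProperty

lemma IsWFS.isWeakFactorizationSystem {L R : MorphismProperty M} (h : IsWFS L R) :
    IsWeakFactorizationSystem L R where
  rlp := by ext X Y g; exact (h.rlp g).symm
  llp := by ext X Y f; exact (h.llp f).symm
  hasFactorization := ⟨fun f => by
    obtain ⟨Z, i, p, hi, hp, fac⟩ := h.fact f
    exact ⟨{ Z, i, p, fac, hi, hp }⟩⟩

namespace RetractArrow

variable {X Y Z T E : M} {f : X ⟶ Y} {g : Z ⟶ T}

noncomputable def ofRightLiftingPropertyOfFac (h : RetractArrow f g) {i : Z ⟶ E} {p : E ⟶ T}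
    (fac : i ≫ p = g) [HasLiftingProperty i f] : RetractArrow f p :=
  have sq : CommSq h.r.left i f (p ≫ h.r.right) := ⟨by rw [h.r_w, reassoc_of% fac]⟩
  { i := Arrow.homMk' (h.i.left ≫ i) h.i.right (by rw [Category.assoc, fac, h.i_w])
    r := Arrow.homMk' sq.lift h.r.right sq.fac_right }

noncomputable def pushoutDescOfFac (h : RetractArrow f g) {j : X ⟶ E} {q : E ⟶ Y}
    (fac : j ≫ q = f) [HasPushout j h.i.left] :
    RetractArrow q (pushout.desc (q ≫ h.i.right) g (by rw [reassoc_of% fac, h.i_w])) where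
  i := Arrow.homMk' (pushout.inl j h.i.left) h.i.right (pushout.inl_desc _ _ _)
  r := Arrow.homMk' (pushout.desc (𝟙 E) (h.r.left ≫ j) (by simp)) h.r.right (by
    apply pushout.hom_ext
    · rw [pushout.inl_desc_assoc, pushout.inl_desc_assoc]
      simp
    · rw [pushout.inr_desc_assoc, pushout.inr_desc_assoc]
      simp [fac])
  retract := by
    ext
    · exact pushout.inl_desc _ _ _
    · exact h.retract_right

end RetractArrow

namespace IsGMC

variable {W C F : MorphismProperty M}

lemma trivialCofibrations_isStableUnderCobaseChange (hM : IsGMC W C F) :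
    (C ⊓ W).IsStableUnderCobaseChange := by
  have := hM.wfs₂.isWeakFactorizationSystem
  rw [← llp_eq_of_wfs (C ⊓ W) F]
  infer_instance

lemma trivialFibrations_isStableUnderRetracts (hM : IsGMC W C F) :
    (F ⊓ W).IsStableUnderRetracts := by
  have := hM.wfs₁.isWeakFactorizationSystem
  rw [← rlp_eq_of_wfs C (F ⊓ W)]
  infer_instance

lemma weakEquivalence_of_retract_of_fibration (hM : IsGMC W C F) {X Y Z T : M}
    {f : X ⟶ Y} {g : Z ⟶ T} (h : RetractArrow f g) (hf : F f) (hg : W g) : W f := by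
  have := hM.wfs₂.isWeakFactorizationSystem
  have := hM.twoOutOfThree
  have := hM.trivialFibrations_isStableUnderRetracts
  let φ := factorizationData (C ⊓ W) F g
  have hp : W φ.p := W.of_precomp _ _ φ.hi.2 (by rwa [φ.fac])
  have := hasLiftingProperty_of_wfs φ.i f φ.hi hf
  have hf' : (F ⊓ W) f :=
    of_retract (RetractArrow.ofRightLiftingPropertyOfFac h φ.fac) ⟨φ.hp, hp⟩
  exact hf'.2

lemma isStableUnderRetracts_weakEquivalences (hM : IsGMC W C F) : W.IsStableUnderRetracts where
  of_retract {X Y Z T f g} h hg := by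
    have := hM.wfs₂.isWeakFactorizationSystem
    have := hM.twoOutOfThree
    let φ := factorizationData (C ⊓ W) F f
    have := hM.pushoutCof φ.i h.i.left φ.hi.1
    have hb : (C ⊓ W) (pushout.inr φ.i h.i.left) :=
      hM.trivialCofibrations_isStableUnderCobaseChange.of_isPushout
        (IsPushout.of_hasPushout _ _).flip φ.hi
    have hq := hM.weakEquivalence_of_retract_of_fibration (RetractArrow.pushoutDescOfFac h φ.fac)
      φ.hp (W.of_precomp _ _ hb.2 (by rwa [pushout.inr_desc]))
    simpa using W.comp_mem _ _ φ.hi.2 hq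

end IsGMC

/-- In a generalized model category, the class of weak equivalences is
closed under retracts. -/
theorem weakEquivalences_closed_under_retracts
    {W C F : MorphismProperty M} (hM : IsGMC W C F)
    {X Y Z T : M} (f : X ⟶ Y) (g : Z ⟶ T)
    (i : X ⟶ Z) (r : Z ⟶ X) (j : Y ⟶ T) (s : T ⟶ Y)
    (hir : i ≫ r = 𝟙 X) (hjs : j ≫ s = 𝟙 Y)
    (hsq₁ : i ≫ g = f ≫ j) (hsq₂ : g ≫ s = r ≫ f)
    (hg : W g) : W f :=
  have := hM.isStableUnderRetracts_weakEquivalences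
  W.of_retract
    { i := Arrow.homMk i j hsq₁
      r := Arrow.homMk r s hsq₂.symm
      retract := by ext <;> simp [hir, hjs] } hg

end PaperStacks
end

section
/- Let M be a generalized model category with classes W, C, F, and let W' ⊇ W be a class of maps with two-out-of-three. Define F' as the class of maps with the right lifting property against C ∩ W'. Then (W', C, F') is a generalized model category (a left Bousfield localization of M) if and only if (C ∩ W', F') is a weak factorization system. -/
open CategoryTheory CategoryTheory.Limits CategoryTheory.Functor

universe w₁ w₂ w₃ w₄ v₁ v₂ v₃ v₄

namespace PaperStacks

variable {M : Type w₁} [Category.{v₁} M]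

/-- If `g` is a retract of `p` (with identity bottom) and `f` lifts against `p`,
then `f` lifts against `g`. -/
lemma hasLiftingProperty_of_retract {A B X Y Z : M} (f : A ⟶ B) (g : X ⟶ Y)
    (i : X ⟶ Z) (l : Z ⟶ X) (p : Z ⟶ Y)
    (hil : i ≫ l = 𝟙 X) (hip : i ≫ p = g) (hlg : l ≫ g = p)
    (h : HasLiftingProperty f p) : HasLiftingProperty f g := by
  constructor
  intro u v sq
  have sq' : CommSq (u ≫ i) f p v := ⟨by rw [Category.assoc, hip, sq.w]⟩
  exact ⟨⟨⟨sq'.lift ≫ l, by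
      rw [← Category.assoc, sq'.fac_left, Category.assoc, hil, Category.comp_id], by
      rw [Category.assoc, hlg, sq'.fac_right]⟩⟩⟩

/-- Given a generalized model category `(W, C, F)` and a class `W' ⊇ W`
with two-out-of-three, setting `F'` to be the maps with the right lifting property
against `C ⊓ W'`, the triple `(W', C, F')` is a generalized model category (a left
Bousfield localization) if and only if `(C ⊓ W', F')` is a weak factorization system. -/
theorem leftBousfieldLocalization_iff_wfs
    {W C F : MorphismProperty M} (hM : IsGMC W C F)
    (W' : MorphismProperty M) (hWW' : W ≤ W') (h23 : W'.HasTwoOutOfThreeProperty)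
    (F' : MorphismProperty M)
    (hF' : ∀ ⦃X Y : M⦄ (g : X ⟶ Y),
      F' g ↔ ∀ ⦃Z T : M⦄ (f : Z ⟶ T), (C ⊓ W') f → HasLiftingProperty f g) :
    IsGMC W' C F' ↔ IsWFS (C ⊓ W') F' := by
  constructor
  · intro h; exact h.wfs₂
  · intro hwfs
    letI := h23
    -- F' ≤ F
    have hF'F : ∀ ⦃X Y : M⦄ (g : X ⟶ Y), F' g → F g := by
      intro X Y g hg
      rw [hM.wfs₂.rlp]
      intro Z T f hf
      exact (hF' g).1 hg f ⟨hf.1, hWW' f hf.2⟩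
    -- F ⊓ W ≤ F'
    have hFWle : ∀ ⦃X Y : M⦄ (g : X ⟶ Y), (F ⊓ W) g → (F' ⊓ W') g := by
      intro X Y g hg
      refine ⟨(hF' g).2 ?_, hWW' g hg.2⟩
      intro Z T f hf
      exact ((hM.wfs₁.rlp g).1 hg) f hf.1
    -- F' ⊓ W' ≤ F ⊓ W
    have hle : ∀ ⦃X Y : M⦄ (g : X ⟶ Y), (F' ⊓ W') g → (F ⊓ W) g := by
      intro X Y g hg
      obtain ⟨Z, i, p, hi, hp, hfac⟩ := hM.wfs₁.fact g
      have hiW' : W' i := W'.of_postcomp i p (hWW' p hp.2) (by rw [hfac]; exact hg.2)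
      have hlift : HasLiftingProperty i g := (hF' g).1 hg.1 i ⟨hi, hiW'⟩
      have sq : CommSq (𝟙 X) i g p := ⟨by simpa using hfac.symm⟩
      have hil : i ≫ sq.lift = 𝟙 X := sq.fac_left
      have hlg : sq.lift ≫ g = p := sq.fac_right
      rw [(hM.wfs₁.rlp g)]
      intro Z' T' f hf
      exact hasLiftingProperty_of_retract f g i sq.lift p hil hfac hlg
        (((hM.wfs₁.rlp p).1 hp) f hf)
    have heq : ∀ ⦃X Y : M⦄ (g : X ⟶ Y), (F' ⊓ W') g ↔ (F ⊓ W) g := by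
      intro X Y g; exact ⟨hle g, hFWle g⟩
    refine ⟨hM.hasInitial, hM.hasTerminal, hM.pushoutCof, ?_, h23, ?_, hwfs⟩
    · intro X Y Z f g hf
      exact hM.pullbackFib f g (hF'F f hf)
    · constructor
      · intro X Y f
        rw [hM.wfs₁.llp f]
        constructor
        · intro h Z T g hg
          exact h g ((heq g).1 hg)
        · intro h Z T g hg
          exact h g ((heq g).2 hg)
      · intro X Y g
        rw [show (F' ⊓ W') g ↔ (F ⊓ W) g from heq g]
        exact hM.wfs₁.rlp g
      · intro X Y f
        obtain ⟨Z, i, p, hi, hp, hfac⟩ := hM.wfs₁.fact f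
        exact ⟨Z, i, p, hi, (heq p).2 hp, hfac⟩

end PaperStacks
end

section
/- In a generalized model category, the pullback of a weak equivalence between fibrant objects along a fibration is a weak equivalence. -/
open CategoryTheory CategoryTheory.Limits CategoryTheory.Functor

universe w₁ w₂ w₃ w₄ v₁ v₂ v₃ v₄

namespace PaperStacks

variable {M : Type w₁} [Category.{v₁} M]

section WFS

variable {L R : MorphismProperty M}

lemma IsWFS.id_right (h : IsWFS L R) (X : M) : R (𝟙 X) :=
  (h.rlp _).mpr (fun _ _ _ _ => inferInstance)

lemma IsWFS.comp_right (h : IsWFS L R) {X Y Z : M} {f : X ⟶ Y} {g : Y ⟶ Z}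
    (hf : R f) (hg : R g) : R (f ≫ g) :=
  (h.rlp _).mpr (fun _ _ c hc => by
    haveI := (h.rlp f).mp hf c hc
    haveI := (h.rlp g).mp hg c hc
    infer_instance)

lemma IsWFS.pb_right (h : IsWFS L R) {P X Y Z : M} {fst : P ⟶ X} {snd : P ⟶ Z}
    {f : X ⟶ Y} {p : Z ⟶ Y} (hpb : IsPullback fst snd f p) (hf : R f) : R snd :=
  (h.rlp _).mpr (fun _ _ c hc => by
    haveI := (h.rlp f).mp hf c hc
    constructor
    intro u x sq
    have sq' : CommSq (u ≫ fst) c f (x ≫ p) :=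
      ⟨by rw [Category.assoc, hpb.w, ← Category.assoc, sq.w, Category.assoc]⟩
    exact ⟨⟨⟨hpb.lift sq'.lift x (by rw [sq'.fac_right]),
      by apply hpb.hom_ext <;> simp [sq.w, reassoc_of% sq'.fac_left], by simp⟩⟩⟩)

lemma IsWFS.retract_right (h : IsWFS L R) {A B C' D : M} {g : A ⟶ B} {v : C' ⟶ D}
    (hv : R v) (s₁ : A ⟶ C') (r₁ : C' ⟶ A) (s₂ : B ⟶ D) (r₂ : D ⟶ B)
    (h₁ : s₁ ≫ r₁ = 𝟙 A) (h₂ : s₂ ≫ r₂ = 𝟙 B)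
    (sq1 : s₁ ≫ v = g ≫ s₂) (sq2 : r₁ ≫ g = v ≫ r₂) : R g :=
  (h.rlp _).mpr (fun _ _ c hc => by
    haveI := (h.rlp v).mp hv c hc
    constructor
    intro u x sq
    have sq' : CommSq (u ≫ s₁) c v (x ≫ s₂) :=
      ⟨by rw [Category.assoc, sq1, ← Category.assoc, sq.w, Category.assoc]⟩
    refine ⟨⟨⟨sq'.lift ≫ r₁, ?_, ?_⟩⟩⟩
    · rw [← Category.assoc, sq'.fac_left, Category.assoc, h₁, Category.comp_id]
    · rw [Category.assoc, sq2, ← Category.assoc, sq'.fac_right,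
        Category.assoc, h₂, Category.comp_id])

lemma IsWFS.po_left (h : IsWFS L R) {P X Y Z : M} {f : Z ⟶ X} {g : Z ⟶ Y}
    {inl : X ⟶ P} {inr : Y ⟶ P} (hpo : IsPushout f g inl inr) (hf : L f) : L inr :=
  (h.llp _).mpr (fun _ _ ρ hρ => by
    haveI := (h.llp f).mp hf ρ hρ
    constructor
    intro t b sq
    have sq' : CommSq (g ≫ t) f ρ (inl ≫ b) :=
      ⟨by rw [Category.assoc, sq.w, ← Category.assoc, ← hpo.w, Category.assoc]⟩
    exact ⟨⟨⟨hpo.desc sq'.lift t (by rw [sq'.fac_left]),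
      by simp,
      by apply hpo.hom_ext <;> simp [sq.w, sq'.fac_right]⟩⟩⟩)

end WFS

section GMC

variable {W C F : MorphismProperty M}

lemma gmc_W_id (hM : IsGMC W C F) (X : M) : W (𝟙 X) :=
  (((hM.wfs₁.rlp (𝟙 X)).mpr (fun _ _ _ _ => inferInstance)) : (F ⊓ W) (𝟙 X)).2

lemma gmc_retract_fib (hM : IsGMC W C F) {A B C' D : M} {g : A ⟶ B} (hg : F g)
    {w : C' ⟶ D} (hw : W w) (s₁ : A ⟶ C') (r₁ : C' ⟶ A) (s₂ : B ⟶ D) (r₂ : D ⟶ B)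
    (h₁ : s₁ ≫ r₁ = 𝟙 A) (h₂ : s₂ ≫ r₂ = 𝟙 B)
    (sq1 : s₁ ≫ w = g ≫ s₂) (sq2 : r₁ ≫ g = w ≫ r₂) : W g := by
  haveI := hM.twoOutOfThree
  obtain ⟨E, j, v, hj, hv, hjv⟩ := hM.wfs₂.fact w
  have hvW : W v := W.of_precomp j v hj.2 (by rw [hjv]; exact hw)
  haveI := (hM.wfs₂.llp j).mp hj g hg
  have sq' : CommSq r₁ j g (v ≫ r₂) :=
    ⟨by rw [sq2, ← hjv, Category.assoc]⟩
  refine (hM.wfs₁.retract_right (R := F ⊓ W) (⟨hv, hvW⟩ : (F ⊓ W) v)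
    (s₁ ≫ j) sq'.lift s₂ r₂ ?_ h₂ ?_ ?_).2
  · rw [Category.assoc, sq'.fac_left, h₁]
  · rw [Category.assoc, hjv, sq1]
  · rw [sq'.fac_right]

lemma gmc_retract_W (hM : IsGMC W C F) {A B C' D : M} {g : A ⟶ B}
    {w : C' ⟶ D} (hw : W w) (s₁ : A ⟶ C') (r₁ : C' ⟶ A) (s₂ : B ⟶ D) (r₂ : D ⟶ B)
    (h₁ : s₁ ≫ r₁ = 𝟙 A) (h₂ : s₂ ≫ r₂ = 𝟙 B)
    (sq1 : s₁ ≫ w = g ≫ s₂) (sq2 : r₁ ≫ g = w ≫ r₂) : W g := by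
  haveI := hM.twoOutOfThree
  obtain ⟨A₀, i, p, hi, hp, hip⟩ := hM.wfs₂.fact g
  haveI : HasPushout i s₁ := hM.pushoutCof i s₁ hi.1
  have hinr : (C ⊓ W) (pushout.inr i s₁) :=
    hM.wfs₂.po_left (IsPushout.of_hasPushout i s₁) hi
  have hcomm : i ≫ p ≫ s₂ = s₁ ≫ w := by
    rw [← Category.assoc, hip, sq1]
  have hφW : W (pushout.desc (p ≫ s₂) w hcomm) := W.of_precomp _ _ hinr.2 (by
    rw [pushout.inr_desc]; exact hw)
  have hmcomm : i ≫ 𝟙 A₀ = s₁ ≫ (r₁ ≫ i) := by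
    rw [Category.comp_id, ← Category.assoc, h₁, Category.id_comp]
  have hWp : W p := by
    refine gmc_retract_fib hM hp hφW (pushout.inl i s₁)
      (pushout.desc (𝟙 A₀) (r₁ ≫ i) hmcomm) s₂ r₂ ?_ h₂ ?_ ?_
    · rw [pushout.inl_desc]
    · rw [pushout.inl_desc]
    · apply pushout.hom_ext
      · simp only [pushout.inl_desc_assoc, Category.id_comp, pushout.inl_desc]
        rw [Category.assoc, h₂, Category.comp_id]
      · simp only [pushout.inr_desc_assoc, pushout.inr_desc]
        rw [Category.assoc, hip, ← sq2]
  rw [← hip]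
  exact W.comp_mem i p hi.2 hWp

/-- Reedy's argument: the pullback of a trivial cofibration with fibrant domain and
codomain along a fibration is a weak equivalence. -/
lemma gmc_reedy (hM : IsGMC W C F) {P X V Q : M}
    {i : X ⟶ V} {gV : Q ⟶ V} {fst : P ⟶ X} {j : P ⟶ Q}
    (hpb : IsPullback fst j i gV)
    (hiC : C i) (hiW : W i) (hgF : F gV)
    (hX : Fibrant F X) (hV : Fibrant F V) : W j := by
  haveI := hM.twoOutOfThree
  obtain ⟨T, hT, hTX⟩ := hX
  obtain ⟨T', hT', hTV⟩ := hV
  -- the retraction r of i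
  have sqr : CommSq (𝟙 X) i (hT.from X) (hT.from V) := ⟨hT.hom_ext _ _⟩
  haveI := (hM.wfs₂.llp i).mp ⟨hiC, hiW⟩ _ hTX
  obtain ⟨r, hir⟩ : ∃ r : V ⟶ X, i ≫ r = 𝟙 X := ⟨sqr.lift, sqr.fac_left⟩
  -- Q is fibrant
  have htQ : F (hT'.from Q) := by
    rw [hT'.hom_ext (hT'.from Q) (gV ≫ hT'.from V)]
    exact hM.wfs₂.comp_right hgF hTV
  -- the product V × V
  haveI instVV : HasPullback (hT'.from V) (hT'.from V) := hM.pullbackFib _ _ hTV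
  obtain ⟨VV, prl, prr, hVV⟩ : ∃ (VV : M) (prl prr : VV ⟶ V),
      IsPullback prl prr (hT'.from V) (hT'.from V) :=
    ⟨_, _, _, IsPullback.of_hasPullback _ _⟩
  have hprlF : F prl := hM.wfs₂.pb_right hVV.flip hTV
  have hprrF : F prr := hM.wfs₂.pb_right hVV hTV
  obtain ⟨Δ, hΔl, hΔr⟩ : ∃ d : V ⟶ VV, d ≫ prl = 𝟙 V ∧ d ≫ prr = 𝟙 V :=
    ⟨hVV.lift (𝟙 V) (𝟙 V) rfl, hVV.lift_fst _ _ _, hVV.lift_snd _ _ _⟩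
  -- path object for V
  obtain ⟨PV, wV, πV, hwV, hπV, hΔfac⟩ := hM.wfs₂.fact Δ
  obtain ⟨e₀, he₀⟩ : ∃ e : PV ⟶ V, e = πV ≫ prl := ⟨_, rfl⟩
  obtain ⟨e₁, he₁⟩ : ∃ e : PV ⟶ V, e = πV ≫ prr := ⟨_, rfl⟩
  have he₀F : F e₀ := he₀ ▸ hM.wfs₂.comp_right hπV hprlF
  have he₁F : F e₁ := he₁ ▸ hM.wfs₂.comp_right hπV hprrF
  have hwe₀ : wV ≫ e₀ = 𝟙 V := by rw [he₀, ← Category.assoc, hΔfac, hΔl]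
  have hwe₁ : wV ≫ e₁ = 𝟙 V := by rw [he₁, ← Category.assoc, hΔfac, hΔr]
  have he₀W : W e₀ := W.of_precomp wV e₀ hwV.2 (by rw [hwe₀]; exact gmc_W_id hM V)
  have he₁W : W e₁ := W.of_precomp wV e₁ hwV.2 (by rw [hwe₁]; exact gmc_W_id hM V)
  -- the homotopy H from the identity to r ≫ i
  obtain ⟨b, hbl, hbr⟩ : ∃ b : V ⟶ VV, b ≫ prl = 𝟙 V ∧ b ≫ prr = r ≫ i :=
    ⟨hVV.lift (𝟙 V) (r ≫ i) (hT'.hom_ext _ _), hVV.lift_fst _ _ _, hVV.lift_snd _ _ _⟩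
  have sqH : CommSq (i ≫ wV) i πV b := by
    constructor
    rw [Category.assoc, hΔfac]
    apply hVV.hom_ext
    · simp only [Category.assoc, hΔl, hbl, Category.comp_id]
    · simp only [Category.assoc, hΔr, hbr, Category.comp_id]
      rw [← Category.assoc, hir, Category.id_comp]
  haveI := (hM.wfs₂.llp i).mp ⟨hiC, hiW⟩ πV hπV
  obtain ⟨H, hiH, hHπ⟩ : ∃ H : V ⟶ PV, i ≫ H = i ≫ wV ∧ H ≫ πV = b :=
    ⟨sqH.lift, sqH.fac_left, sqH.fac_right⟩
  have hHe₀ : H ≫ e₀ = 𝟙 V := by rw [he₀, ← Category.assoc, hHπ, hbl]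
  have hHe₁ : H ≫ e₁ = r ≫ i := by rw [he₁, ← Category.assoc, hHπ, hbr]
  -- the product Q × Q
  haveI instQQ : HasPullback (hT'.from Q) (hT'.from Q) := hM.pullbackFib _ _ htQ
  obtain ⟨QQ, π₁, π₂, hQQ⟩ : ∃ (QQ : M) (π₁ π₂ : QQ ⟶ Q),
      IsPullback π₁ π₂ (hT'.from Q) (hT'.from Q) :=
    ⟨_, _, _, IsPullback.of_hasPullback _ _⟩
  have hπ₁F : F π₁ := hM.wfs₂.pb_right hQQ.flip htQ
  have hπ₂F : F π₂ := hM.wfs₂.pb_right hQQ htQ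
  obtain ⟨G2, hG2l, hG2r⟩ : ∃ G2 : QQ ⟶ VV, G2 ≫ prl = π₁ ≫ gV ∧ G2 ≫ prr = π₂ ≫ gV :=
    ⟨hVV.lift _ _ (hT'.hom_ext _ _), hVV.lift_fst _ _ _, hVV.lift_snd _ _ _⟩
  -- the object Θ = (Q × Q) ×_{V × V} PV
  haveI instΘ : HasPullback G2 πV := hM.pullbackFib πV G2 hπV
  obtain ⟨Θ, θ₁, θ₂, hΘ⟩ : ∃ (Θ : M) (θ₁ : Θ ⟶ QQ) (θ₂ : Θ ⟶ PV),
      IsPullback θ₁ θ₂ G2 πV :=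
    ⟨_, _, _, IsPullback.of_hasPullback _ _⟩
  have hθ₁F : F θ₁ := hM.wfs₂.pb_right hΘ.flip hπV
  have hΘl : θ₁ ≫ π₁ ≫ gV = θ₂ ≫ e₀ := by
    have h := hΘ.w =≫ prl
    simp only [Category.assoc, hG2l] at h
    rw [h, he₀]
  have hΘr : θ₁ ≫ π₂ ≫ gV = θ₂ ≫ e₁ := by
    have h := hΘ.w =≫ prr
    simp only [Category.assoc, hG2r] at h
    rw [h, he₁]
  -- the path object for Q
  obtain ⟨ιc, hιcl, hιcr⟩ : ∃ d : Q ⟶ QQ, d ≫ π₁ = 𝟙 Q ∧ d ≫ π₂ = 𝟙 Q :=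
    ⟨hQQ.lift (𝟙 Q) (𝟙 Q) rfl, hQQ.lift_fst _ _ _, hQQ.lift_snd _ _ _⟩
  have hιcond : ιc ≫ G2 = (gV ≫ wV) ≫ πV := by
    apply hVV.hom_ext
    · simp only [Category.assoc, hG2l]
      rw [← Category.assoc, hιcl, Category.id_comp, ← Category.assoc wV, hΔfac, hΔl,
        Category.comp_id]
    · simp only [Category.assoc, hG2r]
      rw [← Category.assoc, hιcr, Category.id_comp, ← Category.assoc wV, hΔfac, hΔr,
        Category.comp_id]
  obtain ⟨ι, hι₁, hι₂⟩ : ∃ ι : Q ⟶ Θ, ι ≫ θ₁ = ιc ∧ ι ≫ θ₂ = gV ≫ wV :=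
    ⟨hΘ.lift ιc (gV ≫ wV) hιcond, hΘ.lift_fst _ _ _, hΘ.lift_snd _ _ _⟩
  obtain ⟨PQ, wQ, χ, hwQ, hχF, hιfac⟩ := hM.wfs₂.fact ι
  obtain ⟨pe₀, hpe₀⟩ : ∃ e : PQ ⟶ Q, e = χ ≫ θ₁ ≫ π₁ := ⟨_, rfl⟩
  obtain ⟨pe₁, hpe₁⟩ : ∃ e : PQ ⟶ Q, e = χ ≫ θ₁ ≫ π₂ := ⟨_, rfl⟩
  obtain ⟨Pg, hPg⟩ : ∃ e : PQ ⟶ PV, e = χ ≫ θ₂ := ⟨_, rfl⟩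
  have hwQe₀ : wQ ≫ pe₀ = 𝟙 Q := by
    rw [hpe₀, ← Category.assoc, hιfac, ← Category.assoc, hι₁, hιcl]
  have hwQe₁ : wQ ≫ pe₁ = 𝟙 Q := by
    rw [hpe₁, ← Category.assoc, hιfac, ← Category.assoc, hι₁, hιcr]
  have hwQPg : wQ ≫ Pg = gV ≫ wV := by
    rw [hPg, ← Category.assoc, hιfac, hι₂]
  have hpe₀F : F pe₀ := hpe₀ ▸ hM.wfs₂.comp_right hχF (hM.wfs₂.comp_right hθ₁F hπ₁F)
  have hpe₁F : F pe₁ := hpe₁ ▸ hM.wfs₂.comp_right hχF (hM.wfs₂.comp_right hθ₁F hπ₂F)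
  have hpe₀W : W pe₀ := W.of_precomp wQ pe₀ hwQ.2 (by rw [hwQe₀]; exact gmc_W_id hM Q)
  have hpe₁W : W pe₁ := W.of_precomp wQ pe₁ hwQ.2 (by rw [hwQe₁]; exact gmc_W_id hM Q)
  have hPge₀ : pe₀ ≫ gV = Pg ≫ e₀ := by
    rw [hpe₀, hPg]
    simp only [Category.assoc]
    rw [hΘl]
  have hPge₁ : pe₁ ≫ gV = Pg ≫ e₁ := by
    rw [hpe₁, hPg]
    simp only [Category.assoc]
    rw [hΘr]
  -- the object Λ = Q ×_V PV
  haveI instΛ : HasPullback gV e₀ := hM.pullbackFib e₀ gV he₀F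
  obtain ⟨Λo, lQ, lP, hΛ⟩ : ∃ (Λo : M) (lQ : Λo ⟶ Q) (lP : Λo ⟶ PV),
      IsPullback lQ lP gV e₀ :=
    ⟨_, _, _, IsPullback.of_hasPullback _ _⟩
  have hlQFW : (F ⊓ W) lQ := hM.wfs₁.pb_right hΛ.flip ⟨he₀F, he₀W⟩
  have hlPF : F lP := hM.wfs₂.pb_right hΛ hgF
  -- the evaluation map φ and its factor ψ
  obtain ⟨φ, hφl, hφr⟩ : ∃ φ : PQ ⟶ Λo, φ ≫ lQ = pe₀ ∧ φ ≫ lP = Pg :=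
    ⟨hΛ.lift pe₀ Pg hPge₀, hΛ.lift_fst _ _ _, hΛ.lift_snd _ _ _⟩
  obtain ⟨ψ, hψl, hψr⟩ : ∃ ψ : Θ ⟶ Λo, ψ ≫ lQ = θ₁ ≫ π₁ ∧ ψ ≫ lP = θ₂ :=
    ⟨hΛ.lift _ _ (by rw [Category.assoc, hΘl]), hΛ.lift_fst _ _ _, hΛ.lift_snd _ _ _⟩
  have hφψ : φ = χ ≫ ψ := by
    apply hΛ.hom_ext
    · rw [hφl, Category.assoc, hψl, hpe₀]
    · rw [hφr, Category.assoc, hψr, hPg]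
  have hφW : W φ := by
    refine W.of_postcomp φ lQ hlQFW.2 ?_
    rw [hφl]; exact hpe₀W
  have hψF : F ψ := by
    refine (hM.wfs₂.rlp ψ).mpr (fun S T c hc => ?_)
    haveI := (hM.wfs₂.llp c).mp hc gV hgF
    constructor
    intro u x sq
    have h3 : u ≫ θ₂ = c ≫ x ≫ lP := by
      rw [← hψr, ← Category.assoc, sq.w, Category.assoc]
    have sq' : CommSq (u ≫ θ₁ ≫ π₂) c gV (x ≫ lP ≫ e₁) := by
      constructor
      simp only [Category.assoc]
      rw [hΘr, ← Category.assoc, h3]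
      simp only [Category.assoc]
    obtain ⟨ℓ, hℓ₁, hℓ₂⟩ : ∃ ℓ : T ⟶ Q, c ≫ ℓ = u ≫ θ₁ ≫ π₂ ∧ ℓ ≫ gV = x ≫ lP ≫ e₁ :=
      ⟨sq'.lift, sq'.fac_left, sq'.fac_right⟩
    obtain ⟨inner, hinl, hinr⟩ : ∃ n : T ⟶ QQ, n ≫ π₁ = x ≫ lQ ∧ n ≫ π₂ = ℓ :=
      ⟨hQQ.lift _ _ (hT'.hom_ext _ _), hQQ.lift_fst _ _ _, hQQ.lift_snd _ _ _⟩
    have houtercond : inner ≫ G2 = (x ≫ lP) ≫ πV := by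
      apply hVV.hom_ext
      · simp only [Category.assoc, hG2l]
        rw [← Category.assoc, hinl, Category.assoc, hΛ.w, ← he₀]
      · simp only [Category.assoc, hG2r]
        rw [← Category.assoc, hinr, hℓ₂, ← he₁]
    obtain ⟨outer, houtl, houtr⟩ : ∃ o : T ⟶ Θ, o ≫ θ₁ = inner ∧ o ≫ θ₂ = x ≫ lP :=
      ⟨hΘ.lift _ _ houtercond, hΘ.lift_fst _ _ _, hΘ.lift_snd _ _ _⟩
    refine ⟨⟨⟨outer, ?_, ?_⟩⟩⟩
    · apply hΘ.hom_ext
      · apply hQQ.hom_ext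
        · simp only [Category.assoc]
          rw [reassoc_of% houtl, hinl, ← hψl, reassoc_of% sq.w]
        · simp only [Category.assoc]
          rw [reassoc_of% houtl, hinr, hℓ₁]
      · simp only [Category.assoc]
        rw [houtr, h3]
    · apply hΛ.hom_ext
      · simp only [Category.assoc]
        rw [hψl, reassoc_of% houtl, hinl]
      · simp only [Category.assoc]
        rw [hψr, houtr]
  have hφF : F φ := by rw [hφψ]; exact hM.wfs₂.comp_right hχF hψF
  -- factor j as a cofibration followed by a trivial fibration
  obtain ⟨N, c, q, hcC, hqFW, hcq⟩ := hM.wfs₁.fact j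
  -- the map ν
  have hνcond : (𝟙 Q) ≫ gV = (gV ≫ H) ≫ e₀ := by
    rw [Category.id_comp, Category.assoc, hHe₀, Category.comp_id]
  obtain ⟨ν, hνl, hνr⟩ : ∃ ν : Q ⟶ Λo, ν ≫ lQ = 𝟙 Q ∧ ν ≫ lP = gV ≫ H :=
    ⟨hΛ.lift _ _ hνcond, hΛ.lift_fst _ _ _, hΛ.lift_snd _ _ _⟩
  -- the big lifting producing the homotopy G₁
  have sqG : CommSq (j ≫ wQ) c φ (q ≫ ν) := by
    constructor
    rw [← Category.assoc, hcq]
    apply hΛ.hom_ext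
    · simp only [Category.assoc]
      rw [hφl, hwQe₀, hνl]
    · simp only [Category.assoc]
      rw [hφr, hwQPg, hνr, ← Category.assoc, ← Category.assoc, ← hpb.w,
        Category.assoc, Category.assoc, hiH]
  haveI := (hM.wfs₁.llp c).mp hcC φ ⟨hφF, hφW⟩
  obtain ⟨G₁, hcG₁, hG₁φ⟩ : ∃ G₁ : N ⟶ PQ, c ≫ G₁ = j ≫ wQ ∧ G₁ ≫ φ = q ≫ ν :=
    ⟨sqG.lift, sqG.fac_left, sqG.fac_right⟩
  have hG₁e₀ : G₁ ≫ pe₀ = q := by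
    have h := hG₁φ =≫ lQ
    simp only [Category.assoc, hφl, hνl, Category.comp_id] at h
    exact h
  have hG₁Pg : G₁ ≫ Pg = q ≫ gV ≫ H := by
    have h := hG₁φ =≫ lP
    simp only [Category.assoc, hφr, hνr] at h
    exact h
  -- the endpoint β of the lifted homotopy
  obtain ⟨β, hβdef⟩ : ∃ β : N ⟶ Q, β = G₁ ≫ pe₁ := ⟨_, rfl⟩
  have hβg : β ≫ gV = q ≫ gV ≫ r ≫ i := by
    rw [hβdef, Category.assoc, hPge₁, ← Category.assoc, hG₁Pg]
    simp only [Category.assoc]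
    rw [hHe₁]
  have hcβ : c ≫ β = j := by
    rw [hβdef, ← Category.assoc, hcG₁, Category.assoc, hwQe₁, Category.comp_id]
  have hβW : W β := by
    have hG₁W : W G₁ := W.of_postcomp G₁ pe₀ hpe₀W (by rw [hG₁e₀]; exact hqFW.2)
    rw [hβdef]
    exact W.comp_mem G₁ pe₁ hG₁W hpe₁W
  -- the map Φ and the retract argument
  have hΦcond : (q ≫ gV ≫ r) ≫ i = β ≫ gV := by
    rw [hβg]; simp only [Category.assoc]
  obtain ⟨Φ, hΦfst, hΦj⟩ : ∃ Φ : N ⟶ P, Φ ≫ fst = q ≫ gV ≫ r ∧ Φ ≫ j = β :=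
    ⟨hpb.lift _ _ hΦcond, hpb.lift_fst _ _ _, hpb.lift_snd _ _ _⟩
  have hcΦ : c ≫ Φ = 𝟙 P := by
    apply hpb.hom_ext
    · rw [Category.assoc, hΦfst, Category.id_comp, ← Category.assoc, hcq]
      rw [show j ≫ gV ≫ r = (j ≫ gV) ≫ r from (Category.assoc _ _ _).symm, ← hpb.w,
        Category.assoc, hir, Category.comp_id]
    · rw [Category.assoc, hΦj, hcβ, Category.id_comp]
  exact gmc_retract_W hM hβW c Φ (𝟙 Q) (𝟙 Q) hcΦ (Category.comp_id _)
    (by rw [hcβ, Category.comp_id]) (by rw [hΦj, Category.comp_id])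

end GMC

/-- In a generalized model category, the pullback of a weak equivalence
between fibrant objects along a fibration is a weak equivalence. -/
theorem pullback_weakEquivalence_along_fibration
    {W C F : MorphismProperty M} (hM : IsGMC W C F)
    {P X Y Z : M} (f : X ⟶ Y) (p : Z ⟶ Y) (fst : P ⟶ X) (snd : P ⟶ Z)
    (hpb : IsPullback fst snd f p)
    (hf : W f) (hp : F p) (hX : Fibrant F X) (hY : Fibrant F Y) :
    W snd := by
  haveI := hM.twoOutOfThree
  -- factor f as a cofibration followed by a trivial fibration
  obtain ⟨V, i, q₀, hiC, hq₀FW, hfac⟩ := hM.wfs₁.fact f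
  have hiW : W i := W.of_postcomp i q₀ hq₀FW.2 (by rw [hfac]; exact hf)
  have hVfib : Fibrant F V := by
    obtain ⟨T, hT, hTY⟩ := hY
    refine ⟨T, hT, ?_⟩
    rw [hT.hom_ext (hT.from V) (q₀ ≫ hT.from Y)]
    exact hM.wfs₂.comp_right hq₀FW.1 hTY
  -- pull back the trivial fibration q₀ along p
  haveI instQ : HasPullback p q₀ := hM.pullbackFib q₀ p hq₀FW.1
  obtain ⟨Q, gZ, gV, hQ⟩ : ∃ (Q : M) (gZ : Q ⟶ Z) (gV : Q ⟶ V),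
      IsPullback gZ gV p q₀ :=
    ⟨_, _, _, IsPullback.of_hasPullback _ _⟩
  have hgZFW : (F ⊓ W) gZ := hM.wfs₁.pb_right hQ.flip hq₀FW
  have hgVF : F gV := hM.wfs₂.pb_right hQ hp
  -- factor the comparison map
  have hjcond : snd ≫ p = (fst ≫ i) ≫ q₀ := by
    rw [← hpb.w, ← hfac, Category.assoc]
  obtain ⟨j, hjZ, hjV⟩ : ∃ j : P ⟶ Q, j ≫ gZ = snd ∧ j ≫ gV = fst ≫ i :=
    ⟨hQ.lift snd (fst ≫ i) hjcond, hQ.lift_fst _ _ _, hQ.lift_snd _ _ _⟩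
  have hs : IsPullback fst (j ≫ gZ) (i ≫ q₀) p := by
    rw [hjZ, hfac]; exact hpb
  have hpb2 : IsPullback fst j i gV := hs.of_bot hjV.symm hQ.flip
  have hjW : W j := gmc_reedy hM hpb2 hiC hiW hgVF hX hVfib
  rw [← hjZ]
  exact W.comp_mem j gZ hjW hgZFW.2

end PaperStacks
end

section
/- In a generalized model category, every map f : X ⟶ Y between fibrant objects factors as f = q ∘ j where j : X ⟶ Pf is a weak equivalence that is a section of a trivial fibration, and q : Pf ⟶ Y is a fibration (the mapping path factorization). -/
/- The path-object leg `p₀ : PathY ⟶ Y` is a trivial fibration: a fibration as `p` followed by a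
base change of `Y ⟶ *`, and a weak equivalence by two-out-of-three since `s ≫ p₀ = 𝟙`. The map
`q : Pf ⟶ Y` is the composite `Pf ⟶ X × Y ⟶ Y` of two base changes of fibrations, while
`r : Pf ⟶ X × Y ⟶ X` is, by pasting pullback squares, the base change of `p₀` along `f`; so `r` is a
trivial fibration, and two-out-of-three makes its section `j` a weak equivalence. -/

open CategoryTheory CategoryTheory.Limits CategoryTheory.Functor

universe w₁ w₂ w₃ w₄ v₁ v₂ v₃ v₄

namespace PaperStacks

variable {M : Type w₁} [Category.{v₁} M]

namespace IsWFS

variable {L R : MorphismProperty M} (h : IsWFS L R)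
include h

lemma right_eq_rlp : R = L.rlp := by
  ext _ _ g
  exact h.rlp g

lemma isStableUnderBaseChange : R.IsStableUnderBaseChange :=
  h.right_eq_rlp ▸ inferInstance

lemma isMultiplicative : R.IsMultiplicative :=
  h.right_eq_rlp ▸ inferInstance

lemma respectsIso : R.RespectsIso :=
  h.right_eq_rlp ▸ inferInstance

end IsWFS

lemma IsGMC.containsIdentities {W C F : MorphismProperty M} (hM : IsGMC W C F) :
    W.ContainsIdentities :=
  have := hM.wfs₁.isMultiplicative
  ⟨fun X => ((F ⊓ W).id_mem X).2⟩

lemma Fibrant.mem_from {F : MorphismProperty M} [F.RespectsIso] {X T : M} (hX : Fibrant F X)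
    (hT : IsTerminal T) : F (hT.from X) := by
  obtain ⟨T', hT', hX⟩ := hX
  rw [hT.hom_ext (hT.from X) (hT'.from X ≫ (hT'.uniqueUpToIso hT).hom)]
  exact MorphismProperty.RespectsIso.postcomp F _ _ hX

/-- The square `X × Y ⟶ Y × Y` (`f × 𝟙`) over `f : X ⟶ Y`, products taken over `T`. -/
lemma isPullback_prodMap_id {T X Y P YY : M} {tX : X ⟶ T} {tY : Y ⟶ T}
    {a : P ⟶ X} {b : P ⟶ Y} (hP : IsPullback a b tX tY)
    {pr₁ pr₂ : YY ⟶ Y} (hYY : IsPullback pr₁ pr₂ tY tY)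
    {f : X ⟶ Y} (hf : f ≫ tY = tX) {fy : P ⟶ YY} (hfy₁ : fy ≫ pr₁ = a ≫ f)
    (hfy₂ : fy ≫ pr₂ = b) : IsPullback fy a pr₁ f :=
  IsPullback.of_right (by rw [hfy₂, hf]; exact hP.flip) hfy₁ hYY.flip

lemma IsGMC.exists_pathObject {W C F : MorphismProperty M} (hM : IsGMC W C F)
    {T Y YY : M} {tY : Y ⟶ T} {pr₁ pr₂ : YY ⟶ Y} (hYY : IsPullback pr₁ pr₂ tY tY) :
    ∃ (PathY : M) (s : Y ⟶ PathY) (p : PathY ⟶ YY),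
      W s ∧ F p ∧ s ≫ p ≫ pr₁ = 𝟙 Y ∧ s ≫ p ≫ pr₂ = 𝟙 Y := by
  obtain ⟨PathY, s, p, hs, hp, hsp⟩ := hM.wfs₂.fact (hYY.lift (𝟙 Y) (𝟙 Y) rfl)
  exact ⟨PathY, s, p, hs.2, hp, by simp [reassoc_of% hsp], by simp [reassoc_of% hsp]⟩

lemma pathObject_fst_mem {W F : MorphismProperty M} [W.HasTwoOutOfThreeProperty]
    [W.ContainsIdentities] [F.IsStableUnderBaseChange] [F.IsStableUnderComposition]
    {T Y YY PathY : M} {tY : Y ⟶ T} (htY : F tY)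
    {pr₁ pr₂ : YY ⟶ Y} (hYY : IsPullback pr₁ pr₂ tY tY)
    {s : Y ⟶ PathY} {p : PathY ⟶ YY} (hs : W s) (hp : F p) (hs₁ : s ≫ p ≫ pr₁ = 𝟙 Y) :
    (F ⊓ W) (p ≫ pr₁) :=
  ⟨F.comp_mem _ _ hp (F.of_isPullback hYY.flip htY),
    W.of_precomp s _ hs (hs₁ ▸ W.id_mem Y)⟩

theorem exists_mappingPath_factorization {W F : MorphismProperty M}
    [W.HasTwoOutOfThreeProperty] [W.ContainsIdentities]
    [F.IsStableUnderBaseChange] [F.IsStableUnderComposition] [(F ⊓ W).IsStableUnderBaseChange]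
    {T X Y P YY PathY Pf : M} {tX : X ⟶ T} {tY : Y ⟶ T} (htX : F tX) (htY : F tY)
    {a : P ⟶ X} {b : P ⟶ Y} (hP : IsPullback a b tX tY)
    {pr₁ pr₂ : YY ⟶ Y} (hYY : IsPullback pr₁ pr₂ tY tY)
    {s : Y ⟶ PathY} {p : PathY ⟶ YY} (hs : W s) (hp : F p)
    (hs₁ : s ≫ p ≫ pr₁ = 𝟙 Y) (hs₂ : s ≫ p ≫ pr₂ = 𝟙 Y)
    {f : X ⟶ Y} (hf : f ≫ tY = tX) {fy : P ⟶ YY} (hfy₁ : fy ≫ pr₁ = a ≫ f)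
    (hfy₂ : fy ≫ pr₂ = b) {k : Pf ⟶ P} {e : Pf ⟶ PathY} (hPf : IsPullback k e fy p) :
    ∃ j : X ⟶ Pf, j ≫ k ≫ b = f ∧ W j ∧ j ≫ k ≫ a = 𝟙 X ∧
      (F ⊓ W) (k ≫ a) ∧ F (k ≫ b) := by
  have hr : (F ⊓ W) (k ≫ a) :=
    (F ⊓ W).of_isPullback (hPf.flip.paste_vert (isPullback_prodMap_id hP hYY hf hfy₁ hfy₂))
      (pathObject_fst_mem htY hYY hs hp hs₁)
  let jP : X ⟶ P := hP.lift (𝟙 X) f (by simp [hf])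
  have hjP : jP ≫ fy = f ≫ s ≫ p :=
    hYY.hom_ext (by simp [jP, hfy₁, hs₁]) (by simp [jP, hfy₂, hs₂])
  let j : X ⟶ Pf := hPf.lift jP (f ≫ s) (by simpa using hjP)
  have hjr : j ≫ k ≫ a = 𝟙 X := by simp [j, jP]
  refine ⟨j, by simp [j, jP], W.of_postcomp j _ hr.2 (hjr ▸ W.id_mem X), hjr, hr, ?_⟩
  exact F.comp_mem _ _ (F.of_isPullback hPf.flip hp) (F.of_isPullback hP htX)

/-- In a generalized model category, every map between fibrant objects
factors as a weak equivalence that is a section of a trivial fibration, followed by a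
fibration (the mapping path factorization). -/
theorem mapping_path_factorization
    {W C F : MorphismProperty M} (hM : IsGMC W C F)
    {X Y : M} (f : X ⟶ Y) (hX : Fibrant F X) (hY : Fibrant F Y) :
    ∃ (Pf : M) (j : X ⟶ Pf) (q : Pf ⟶ Y),
      f = j ≫ q ∧ W j ∧
      (∃ r : Pf ⟶ X, j ≫ r = 𝟙 X ∧ F r ∧ W r) ∧
      F q := by
  have := hM.twoOutOfThree
  have := hM.containsIdentities
  have := hM.wfs₂.isStableUnderBaseChange
  have := hM.wfs₂.isMultiplicative
  have := hM.wfs₂.respectsIso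
  have := hM.wfs₁.isStableUnderBaseChange
  obtain ⟨T, hT, htY⟩ := hY
  have htX : F (hT.from X) := hX.mem_from hT
  have := hM.pullbackFib _ (hT.from X) htY
  have := hM.pullbackFib _ (hT.from Y) htY
  have hYY := IsPullback.of_hasPullback (hT.from Y) (hT.from Y)
  obtain ⟨PathY, s, p, hs, hp, hs₁, hs₂⟩ := hM.exists_pathObject hYY
  let fy := hYY.lift (pullback.fst _ _ ≫ f) (pullback.snd (hT.from X) (hT.from Y))
    (hT.hom_ext _ _)
  have := hM.pullbackFib p fy hp
  obtain ⟨j, hjq, hj, hjr, hr, hq⟩ :=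
    exists_mappingPath_factorization htX htY (IsPullback.of_hasPullback _ _) hYY hs hp hs₁ hs₂
      (hT.hom_ext _ _) (hYY.lift_fst _ _ _) (hYY.lift_snd _ _ _) (IsPullback.of_hasPullback fy p)
  exact ⟨_, j, _, hjq.symm, hj, ⟨_, hjr, hr.1, hr.2⟩, hq⟩

end PaperStacks
end

section
/- Let u : F ⥤ G be a cartesian functor between Grothendieck fibrations over E. Then u is a trivial fibration (i.e., both an equivalence of categories and an isofibration) if and only if for every object S of E the induced functor u_S : F_S ⥤ G_S is a surjective equivalence. -/
/-!
For categories, an equivalence that is an isofibration is the same as a full and faithful functor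
that is surjective on objects: isomorphisms lift by fullness and conservativity, and an
essentially surjective isofibration hits every object. Each of these three properties passes
directly from `u` to its fibre functors. Conversely, every arrow `φ : a ⟶ b` of `F` factors
uniquely as a vertical arrow followed by a cartesian lift `χ` of `p.map φ`, and since `u χ` is
cartesian as well, the same holds for arrows `u a ⟶ u b` over `p.map φ`; so fullness and
faithfulness of `u` reduce to those of the fibre functor over `p.obj a`.
-/

open CategoryTheory CategoryTheory.Limits CategoryTheory.Functor

universe w₁ w₂ w₃ w₄ v₁ v₂ v₃ v₄

namespace PaperStacks

section Categories

variable {A : Type w₁} {B : Type w₂} [Category.{v₁} A] [Category.{v₂} B] (u : A ⥤ B)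

lemma IsIsofibration.surjective_obj [u.EssSurj] (hu : IsIsofibration u) :
    Function.Surjective u.obj := fun b => by
  obtain ⟨a, -, hab, -⟩ := hu (u.objPreimage b) b (u.objObjPreimageIso b)
  exact ⟨a, hab⟩

lemma isIsofibration_of_surjective_obj [u.Full] [u.Faithful] (hu : Function.Surjective u.obj) :
    IsIsofibration u := fun a b f => by
  obtain ⟨a', rfl⟩ := hu b
  exact ⟨a', u.preimageIso f, rfl, by simp⟩

lemma isSurjectiveEquivalence_iff :
    IsSurjectiveEquivalence u ↔ u.Faithful ∧ u.Full ∧ Function.Surjective u.obj :=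
  ⟨fun ⟨_, hu⟩ => ⟨inferInstance, inferInstance, hu⟩,
    fun ⟨_, _, hu⟩ => ⟨{ essSurj := u.essSurj_of_surj hu }, hu⟩⟩

lemma isEquivalence_and_isIsofibration_iff :
    (u.IsEquivalence ∧ IsIsofibration u) ↔ IsSurjectiveEquivalence u := by
  refine ⟨fun ⟨_, hu⟩ => ⟨inferInstance, hu.surjective_obj⟩, fun h => ?_⟩
  obtain ⟨_, _, hu⟩ := (isSurjectiveEquivalence_iff u).1 h
  exact ⟨h.1, isIsofibration_of_surjective_obj u hu⟩

end Categories

section Fibres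

variable {E : Type w₁} {F : Type w₂} {G : Type w₃}
    [Category.{v₁} E] [Category.{v₂} F] [Category.{v₃} G]
    {p : F ⥤ E} {q : G ⥤ E} (u : F ⥤ G)

lemma isHomLift_map_iff (hu : u ⋙ q = p) {R S : E} {a b : F} (f : R ⟶ S) (φ : a ⟶ b) :
    q.IsHomLift f (u.map φ) ↔ p.IsHomLift f φ := by
  subst hu
  constructor <;> intro h
  · exact IsHomLift.of_fac' _ f φ (IsHomLift.domain_eq q f (u.map φ))
      (IsHomLift.codomain_eq q f (u.map φ)) (IsHomLift.fac' q f (u.map φ))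
  · exact IsHomLift.of_fac' q f (u.map φ) (IsHomLift.domain_eq (u ⋙ q) f φ)
      (IsHomLift.codomain_eq (u ⋙ q) f φ) (IsHomLift.fac' (u ⋙ q) f φ)

lemma surjective_fiberMap_obj (hu : u ⋙ q = p) (h : Function.Surjective u.obj) (S : E) :
    Function.Surjective (fiberMap u hu S).obj := fun ⟨b, hb⟩ => by
  obtain ⟨a, rfl⟩ := h b
  exact ⟨⟨a, by rw [← hu, comp_obj, hb]⟩, rfl⟩

lemma surjective_obj_of_surjective_fiberMap (hu : u ⋙ q = p)
    (h : ∀ S, Function.Surjective (fiberMap u hu S).obj) : Function.Surjective u.obj :=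
  fun b => by
    obtain ⟨a, ha⟩ := h (q.obj b) ⟨b, rfl⟩
    exact ⟨a.1, congrArg Subtype.val ha⟩

instance faithful_fiberMap [u.Faithful] (hu : u ⋙ q = p) (S : E) :
    (fiberMap u hu S).Faithful where
  map_injective h := Fiber.hom_ext (u.map_injective (congrArg Subtype.val h))

instance full_fiberMap [u.Full] (hu : u ⋙ q = p) (S : E) : (fiberMap u hu S).Full where
  map_surjective {a b} ψ := by
    let ψ' : u.obj a.1 ⟶ u.obj b.1 := ψ.1
    have : p.IsHomLift (𝟙 S) (u.preimage ψ') :=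
      (isHomLift_map_iff u hu _ _).1 (by rw [u.map_preimage]; exact ψ.2)
    exact ⟨⟨u.preimage ψ', this⟩, Fiber.hom_ext (u.map_preimage ψ')⟩

lemma map_injective_of_faithful_fiberMap (hu : u ⋙ q = p) {S : E}
    [(fiberMap u hu S).Faithful] {a b : F} {φ ψ : a ⟶ b} [p.IsHomLift (𝟙 S) φ]
    [p.IsHomLift (𝟙 S) ψ] (h : u.map φ = u.map ψ) : φ = ψ := by
  let a' : Fiber p S := ⟨a, IsHomLift.domain_eq p (𝟙 S) φ⟩
  let b' : Fiber p S := ⟨b, IsHomLift.codomain_eq p (𝟙 S) φ⟩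
  exact congrArg Subtype.val <| (fiberMap u hu S).map_injective
    (X := a') (Y := b') (a₁ := ⟨φ, inferInstance⟩) (a₂ := ⟨ψ, inferInstance⟩) (Fiber.hom_ext h)

lemma exists_map_eq_of_full_fiberMap (hu : u ⋙ q = p) {S : E} [(fiberMap u hu S).Full]
    {a b : F} (ha : p.obj a = S) (hb : p.obj b = S) (ψ : u.obj a ⟶ u.obj b)
    [q.IsHomLift (𝟙 S) ψ] : ∃ φ : a ⟶ b, u.map φ = ψ := by
  let a' : Fiber p S := ⟨a, ha⟩
  let b' : Fiber p S := ⟨b, hb⟩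
  let ψ' : (fiberMap u hu S).obj a' ⟶ (fiberMap u hu S).obj b' := ⟨ψ, ‹_›⟩
  obtain ⟨φ, hφ⟩ := (fiberMap u hu S).map_surjective ψ'
  exact ⟨φ.1, congrArg Subtype.val hφ⟩

lemma faithful_of_faithful_fiberMap [p.IsFibered] (hu : u ⋙ q = p)
    (hcart : ∀ ⦃a b : F⦄ (φ : a ⟶ b) ⦃R S : E⦄ (f : R ⟶ S),
      p.IsStronglyCartesian f φ → q.IsStronglyCartesian f (u.map φ))
    (h : ∀ S, (fiberMap u hu S).Faithful) : u.Faithful where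
  map_injective {a b φ ψ} hφψ := by
    obtain ⟨a', χ, _⟩ := IsPreFibered.exists_isCartesian' (p.map φ)
    have : q.IsStronglyCartesian (p.map φ) (u.map χ) := hcart χ _ inferInstance
    have : p.IsHomLift (p.map φ) ψ :=
      (isHomLift_map_iff u hu _ _).1 (hφψ ▸ (isHomLift_map_iff u hu _ _).2 inferInstance)
    let τ (φ' : a ⟶ b) [p.IsHomLift (p.map φ) φ'] : a ⟶ a' :=
      IsStronglyCartesian.map p (p.map φ) χ (f' := p.map φ) (g := 𝟙 _) (Category.id_comp _).symm φ'
    have hτ : τ φ = τ ψ := by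
      have := (isHomLift_map_iff u hu (𝟙 (p.obj a)) (τ φ)).2 inferInstance
      have := (isHomLift_map_iff u hu (𝟙 (p.obj a)) (τ ψ)).2 inferInstance
      have := h (p.obj a)
      refine map_injective_of_faithful_fiberMap u hu (S := p.obj a) ?_
      refine IsStronglyCartesian.ext q (p.map φ) (u.map χ) (𝟙 _) ?_
      simp only [← u.map_comp, τ, IsStronglyCartesian.fac, hφψ]
    calc φ = τ φ ≫ χ := (IsStronglyCartesian.fac p _ χ _ φ).symm
      _ = τ ψ ≫ χ := by rw [hτ]
      _ = ψ := IsStronglyCartesian.fac p _ χ _ ψ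

lemma full_of_full_fiberMap [p.IsFibered] (hu : u ⋙ q = p)
    (hcart : ∀ ⦃a b : F⦄ (φ : a ⟶ b) ⦃R S : E⦄ (f : R ⟶ S),
      p.IsStronglyCartesian f φ → q.IsStronglyCartesian f (u.map φ))
    (h : ∀ S, (fiberMap u hu S).Full) : u.Full where
  map_surjective {a b} ψ := by
    subst hu
    obtain ⟨a', χ, _⟩ := IsPreFibered.exists_isCartesian' (p := u ⋙ q) (a := b) (q.map ψ)
    have : q.IsStronglyCartesian (q.map ψ) (u.map χ) := hcart χ _ inferInstance
    have := h ((u ⋙ q).obj a)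
    let τ : u.obj a ⟶ u.obj a' :=
      IsStronglyCartesian.map q (q.map ψ) (u.map χ) (f' := q.map ψ) (g := 𝟙 _)
        (Category.id_comp _).symm ψ
    obtain ⟨σ, hσ⟩ := exists_map_eq_of_full_fiberMap u rfl rfl
      (IsHomLift.domain_eq (u ⋙ q) (q.map ψ) χ) τ
    refine ⟨σ ≫ χ, ?_⟩
    rw [u.map_comp, hσ]
    exact IsStronglyCartesian.fac q _ (u.map χ) _ ψ

end Fibres

theorem trivialFibration_iff_fiberwise_surjective_equivalence_general
    {E : Type w₁} {F : Type w₂} {G : Type w₃}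
    [Category.{v₁} E] [Category.{v₂} F] [Category.{v₃} G]
    {p : F ⥤ E} {q : G ⥤ E} (u : F ⥤ G) (hu : u ⋙ q = p)
    (hp : p.IsFibered)
    (hcart : ∀ ⦃a b : F⦄ (φ : a ⟶ b) ⦃R S : E⦄ (f : R ⟶ S),
      p.IsStronglyCartesian f φ → q.IsStronglyCartesian f (u.map φ)) :
    (u.IsEquivalence ∧ IsIsofibration u) ↔
      ∀ S : E, IsSurjectiveEquivalence (fiberMap u hu S) := by
  simp only [isEquivalence_and_isIsofibration_iff, isSurjectiveEquivalence_iff]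
  constructor
  · rintro ⟨_, _, hsurj⟩ S
    exact ⟨inferInstance, inferInstance, surjective_fiberMap_obj u hu hsurj S⟩
  · intro h
    exact ⟨faithful_of_faithful_fiberMap u hu hcart fun S => (h S).1,
      full_of_full_fiberMap u hu hcart fun S => (h S).2.1,
      surjective_obj_of_surjective_fiberMap u hu fun S => (h S).2.2⟩

/-- A cartesian functor `u : F ⥤ G` between Grothendieck fibrations over
`E` is a trivial fibration (an equivalence of categories and an isofibration) if and
only if all the induced functors on fibre categories are surjective equivalences. -/
theorem trivialFibration_iff_fiberwise_surjective_equivalence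
    {E : Type w₁} {F : Type w₂} {G : Type w₃}
    [Category.{v₁} E] [Category.{v₂} F] [Category.{v₃} G]
    {p : F ⥤ E} {q : G ⥤ E} (u : F ⥤ G) (hu : u ⋙ q = p)
    (hp : p.IsFibered) (hq : q.IsFibered)
    (hcart : ∀ ⦃a b : F⦄ (φ : a ⟶ b) ⦃R S : E⦄ (f : R ⟶ S),
      p.IsStronglyCartesian f φ → q.IsStronglyCartesian f (u.map φ)) :
    (u.IsEquivalence ∧ IsIsofibration u) ↔
      ∀ S : E, IsSurjectiveEquivalence (fiberMap u hu S) :=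
  trivialFibration_iff_fiberwise_surjective_equivalence_general u hu hp hcart

end PaperStacks
end

section
/- Let F, G, H be Grothendieck fibrations over E and u : F ⥤ H, v : G ⥤ H cartesian E-functors with u an isofibration. Then the pullback category F ×_H G (computed in categories over E) is a Grothendieck fibration over E, and the fibre of F ×_H G over any object S of E is the pullback F_S ×_{H_S} G_S of the fibre categories. -/
open CategoryTheory CategoryTheory.Limits CategoryTheory.Functor

universe w₁ w₂ w₃ w₄ v₁ v₂ v₃ v₄

namespace PaperStacks

section CatPullback

variable {F : Type w₁} {G : Type w₂} {H : Type w₃}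
  [Category.{v₁} F] [Category.{v₂} G] [Category.{v₃} H]

/-- The strict pullback of categories along `u : F ⥤ H` and `v : G ⥤ H`: objects are
pairs `(x, y)` with `u.obj x = v.obj y`. -/
structure CatPullback (u : F ⥤ H) (v : G ⥤ H) where
  left : F
  right : G
  w : u.obj left = v.obj right

variable {u : F ⥤ H} {v : G ⥤ H}

instance : Category (CatPullback u v) where
  Hom a b := { fg : (a.left ⟶ b.left) × (a.right ⟶ b.right) //
      u.map fg.1 ≫ eqToHom b.w = eqToHom a.w ≫ v.map fg.2 }
  id a := ⟨(𝟙 a.left, 𝟙 a.right), by simp⟩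
  comp f g := ⟨(f.1.1 ≫ g.1.1, f.1.2 ≫ g.1.2), by
    rw [Functor.map_comp, Functor.map_comp, Category.assoc, g.2,
      ← Category.assoc, f.2, Category.assoc]⟩
  id_comp f := by apply Subtype.ext; simp
  comp_id f := by apply Subtype.ext; simp
  assoc f g h := by apply Subtype.ext; simp

/-- The first projection of the strict pullback of categories. -/
def CatPullback.fst (u : F ⥤ H) (v : G ⥤ H) : CatPullback u v ⥤ F where
  obj a := a.left
  map f := f.1.1

end CatPullback

/-!
Pick cartesian lifts `φ` in `F` and `ψ` in `G` of the same arrow of `E` into the two components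
of an object of the pullback. Since `u` and `v` are cartesian, `u φ` and `v ψ` are cartesian
lifts of that arrow to one object of `H`, so they differ by a vertical isomorphism. Lifting it
along the isofibration `u` corrects the domain of `φ` so that the pair becomes a morphism of the
strict pullback, and this pair is cartesian because each component is and the factorisations
of the components agree in `H` by cartesianness of `v ψ`. Over a fixed object the fibre of the
pullback is the pullback of the fibres on the nose.
-/

section Fibrations

variable {E : Type w₁} {F : Type w₂} {G : Type w₃} {H : Type w₄}
  [Category.{v₁} E] [Category.{v₂} F] [Category.{v₃} G] [Category.{v₄} H]

lemma isHomLift_comp_iff_s16 (u : F ⥤ H) (r : H ⥤ E) {R S : E} {a b : F} (f : R ⟶ S)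
    (φ : a ⟶ b) : (u ⋙ r).IsHomLift f φ ↔ r.IsHomLift f (u.map φ) := by
  constructor
  · rintro ⟨⟩
    exact IsHomLift.map r (u.map φ)
  · rintro ⟨⟩
    exact IsHomLift.map (u ⋙ r) φ

def IsCartesianFunctor (p : F ⥤ E) (r : H ⥤ E) (u : F ⥤ H) : Prop :=
  ∀ ⦃a b : F⦄ (φ : a ⟶ b) ⦃R S : E⦄ (f : R ⟶ S),
    p.IsStronglyCartesian f φ → r.IsStronglyCartesian f (u.map φ)

lemma map_inv_eq_of_map_hom_eq {u : F ⥤ H} {x x' : F} {y : H} (e : u.obj x ≅ y) (ex : x ≅ x')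
    (h : u.obj x' = y) (hex : u.map ex.hom = e.hom ≫ eqToHom h.symm) :
    u.map ex.inv = eqToHom h ≫ e.inv :=
  congrArg Iso.inv (show u.mapIso ex = e ≪≫ eqToIso h.symm from Iso.ext hex)

lemma _root_.CategoryTheory.Functor.Fiber.val_comp {p : F ⥤ E} {S : E}
    {a b c : Fiber p S} (φ : a ⟶ b) (ψ : b ⟶ c) : (φ ≫ ψ).1 = φ.1 ≫ ψ.1 :=
  rfl

lemma _root_.CategoryTheory.Functor.Fiber.val_eqToHom {p : F ⥤ E} {S : E}
    {a b : Fiber p S} (h : a = b) : (eqToHom h).1 = eqToHom (congrArg Subtype.val h) := by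
  subst h; rfl

namespace CatPullback

variable {u : F ⥤ H} {v : G ⥤ H}

@[ext]
lemma hom_ext {a b : CatPullback u v} {φ ψ : a ⟶ b} (h₁ : φ.1.1 = ψ.1.1)
    (h₂ : φ.1.2 = ψ.1.2) : φ = ψ :=
  Subtype.ext (Prod.ext h₁ h₂)

lemma ext {a b : CatPullback u v} (h₁ : a.left = b.left) (h₂ : a.right = b.right) : a = b := by
  cases a; cases b; cases h₁; cases h₂; rfl

lemma map_snd {a b : CatPullback u v} (φ : a ⟶ b) :
    v.map φ.1.2 = eqToHom a.w.symm ≫ u.map φ.1.1 ≫ eqToHom b.w := by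
  rw [φ.2]; simp

lemma isHomLift_fst_comp_iff (P : F ⥤ E) {R S : E} (f : R ⟶ S) {a b : CatPullback u v}
    (φ : a ⟶ b) : (fst u v ⋙ P).IsHomLift f φ ↔ P.IsHomLift f φ.1.1 :=
  isHomLift_comp_iff_s16 (fst u v) P f φ

lemma isHomLift_snd (r : H ⥤ E) {R S : E} (f : R ⟶ S) {a b : CatPullback u v} (φ : a ⟶ b)
    [(u ⋙ r).IsHomLift f φ.1.1] : (v ⋙ r).IsHomLift f φ.1.2 := by
  have := (isHomLift_comp_iff_s16 u r f φ.1.1).1 inferInstance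
  rw [isHomLift_comp_iff_s16, map_snd]
  infer_instance

/-- The cartesianness of `v.map φ.1.2` makes the factorisations of the two components agree
in `H`. -/
lemma isStronglyCartesian_of_components (r : H ⥤ E) {R S : E} (f : R ⟶ S)
    {a b : CatPullback u v} (φ : b ⟶ a) [(u ⋙ r).IsStronglyCartesian f φ.1.1]
    [(v ⋙ r).IsStronglyCartesian f φ.1.2] [r.IsStronglyCartesian f (v.map φ.1.2)] :
    (fst u v ⋙ u ⋙ r).IsStronglyCartesian f φ where
  toIsHomLift := (isHomLift_fst_comp_iff _ f φ).2 inferInstance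
  universal_property' {c} g τ hτ := by
    have : (u ⋙ r).IsHomLift (g ≫ f) τ.1.1 := (isHomLift_fst_comp_iff _ _ τ).1 hτ
    have : (v ⋙ r).IsHomLift (g ≫ f) τ.1.2 := isHomLift_snd r _ τ
    let χ₁ := IsStronglyCartesian.map (u ⋙ r) f φ.1.1 (g := g) rfl τ.1.1
    let χ₂ := IsStronglyCartesian.map (v ⋙ r) f φ.1.2 (g := g) rfl τ.1.2
    have : r.IsHomLift g (u.map χ₁) := (isHomLift_comp_iff_s16 u r g χ₁).1 inferInstance
    have : r.IsHomLift g (v.map χ₂) := (isHomLift_comp_iff_s16 v r g χ₂).1 inferInstance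
    have hχ : u.map χ₁ ≫ eqToHom b.w = eqToHom c.w ≫ v.map χ₂ := by
      apply IsStronglyCartesian.ext r f (v.map φ.1.2) g
      calc (u.map χ₁ ≫ eqToHom b.w) ≫ v.map φ.1.2
          = u.map (χ₁ ≫ φ.1.1) ≫ eqToHom a.w := by simp [map_snd]
        _ = eqToHom c.w ≫ v.map τ.1.2 := by rw [IsStronglyCartesian.fac, τ.2]
        _ = (eqToHom c.w ≫ v.map χ₂) ≫ v.map φ.1.2 := by
          rw [Category.assoc, ← v.map_comp, IsStronglyCartesian.fac]
    refine ⟨⟨(χ₁, χ₂), hχ⟩, ⟨(isHomLift_fst_comp_iff _ g _).2 inferInstance, ?_⟩, ?_⟩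
    · ext
      exacts [IsStronglyCartesian.fac (u ⋙ r) f φ.1.1 rfl τ.1.1,
        IsStronglyCartesian.fac (v ⋙ r) f φ.1.2 rfl τ.1.2]
    · rintro π ⟨hπ, rfl⟩
      have : (u ⋙ r).IsHomLift g π.1.1 := (isHomLift_fst_comp_iff _ g π).1 hπ
      have : (v ⋙ r).IsHomLift g π.1.2 := isHomLift_snd r g π
      ext
      exacts [IsStronglyCartesian.map_uniq (u ⋙ r) f φ.1.1 rfl _ _ rfl,
        IsStronglyCartesian.map_uniq (v ⋙ r) f φ.1.2 rfl _ _ rfl]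

lemma exists_isStronglyCartesian (r : H ⥤ E) [(u ⋙ r).IsFibered] [(v ⋙ r).IsFibered]
    (hu : IsCartesianFunctor (u ⋙ r) r u) (hv : IsCartesianFunctor (v ⋙ r) r v)
    (hiso : IsIsofibration u) (a : CatPullback u v) {R : E} (f : R ⟶ (u ⋙ r).obj a.left) :
    ∃ (b : CatPullback u v) (φ : b ⟶ a), (fst u v ⋙ u ⋙ r).IsStronglyCartesian f φ := by
  obtain ⟨x, φ, _⟩ := IsPreFibered.exists_isCartesian' (p := u ⋙ r) f
  obtain ⟨y, ψ, _⟩ := IsPreFibered.exists_isCartesian (v ⋙ r) (congrArg r.obj a.w.symm) f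
  have := hu φ f inferInstance
  have := hv ψ f inferInstance
  have : r.IsHomLift (𝟙 ((u ⋙ r).obj a.left)) (eqToIso a.w.symm).hom :=
    IsHomLift.eqToHom_codomain_lift_id a.w.symm rfl
  have : r.IsCartesian f (v.map ψ ≫ (eqToIso a.w.symm).hom) := inferInstance
  let e := IsCartesian.domainUniqueUpToIso r f (v.map ψ ≫ (eqToIso a.w.symm).hom) (u.map φ)
  obtain ⟨x', ex, h, hex⟩ := hiso x (v.obj y) e
  have hex' := map_inv_eq_of_map_hom_eq e ex h hex
  have : (u ⋙ r).IsHomLift (𝟙 R) ex.symm.hom := by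
    rw [isHomLift_comp_iff_s16, Iso.symm_hom, hex']; infer_instance
  have : (u ⋙ r).IsStronglyCartesian f (ex.inv ≫ φ) := by
    simpa using IsStronglyCartesian.comp (p := u ⋙ r) (f := 𝟙 R) (g := f) (φ := ex.symm.hom)
      (ψ := φ)
  have w : u.map (ex.inv ≫ φ) ≫ eqToHom a.w = eqToHom h ≫ v.map ψ := by
    simp [hex', e]
  exact ⟨⟨x', y, h⟩, ⟨(ex.inv ≫ φ, ψ), w⟩, isStronglyCartesian_of_components r f _⟩

variable (u v) in
def fiberComparison (r : H ⥤ E) (S : E) :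
    Fiber (fst u v ⋙ u ⋙ r) S ⥤
      CatPullback (fiberMap u (rfl : u ⋙ r = _) S) (fiberMap v (rfl : v ⋙ r = _) S) where
  obj a :=
    { left := ⟨a.1.left, a.2⟩
      right := ⟨a.1.right, by rw [comp_obj, ← a.1.w]; exact a.2⟩
      w := Subtype.ext a.1.w }
  map {a b} τ :=
    have : (u ⋙ r).IsHomLift (𝟙 S) τ.1.1.1 := (isHomLift_fst_comp_iff _ _ τ.1).1 τ.2
    ⟨(⟨τ.1.1.1, this⟩, ⟨τ.1.1.2, isHomLift_snd r _ τ.1⟩), Subtype.ext <| by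
      rw [Fiber.val_comp, Fiber.val_comp, Fiber.val_eqToHom, Fiber.val_eqToHom]
      exact τ.1.2⟩

variable (u v)

lemma fiberComparison_obj_bijective (r : H ⥤ E) (S : E) :
    Function.Bijective (fiberComparison u v r S).obj := by
  refine ⟨fun a b hab => Subtype.ext (ext ?_ ?_), fun c => ?_⟩
  · exact congrArg (fun z => z.left.1) hab
  · exact congrArg (fun z => z.right.1) hab
  · exact ⟨⟨⟨c.left.1, c.right.1, congrArg Subtype.val c.w⟩, c.left.2⟩, rfl⟩

instance (r : H ⥤ E) (S : E) : (fiberComparison u v r S).Faithful where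
  map_injective h := by
    ext
    · exact congrArg (fun z => z.1.1.1) h
    · exact congrArg (fun z => z.1.2.1) h

instance (r : H ⥤ E) (S : E) : (fiberComparison u v r S).Full where
  map_surjective g := by
    refine ⟨⟨⟨(g.1.1.1, g.1.2.1), ?_⟩, (isHomLift_fst_comp_iff _ _ _).2 g.1.1.2⟩, rfl⟩
    have := congrArg Subtype.val g.2
    rwa [Fiber.val_comp, Fiber.val_comp, Fiber.val_eqToHom, Fiber.val_eqToHom] at this

instance (r : H ⥤ E) (S : E) : (fiberComparison u v r S).IsEquivalence where
  essSurj.mem_essImage c :=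
    ⟨_, ⟨eqToIso ((fiberComparison_obj_bijective u v r S).2 c).choose_spec⟩⟩

end CatPullback

end Fibrations

theorem catPullback_isFibered_and_fiber_general
    {E : Type w₁} {F : Type w₂} {G : Type w₃} {H : Type w₄}
    [Category.{v₁} E] [Category.{v₂} F] [Category.{v₃} G] [Category.{v₄} H]
    {p : F ⥤ E} {q : G ⥤ E} {r : H ⥤ E}
    (u : F ⥤ H) (v : G ⥤ H) (husq : u ⋙ r = p) (hvsq : v ⋙ r = q)
    (hp : p.IsFibered) (hq : q.IsFibered)
    (hucart : ∀ ⦃a b : F⦄ (φ : a ⟶ b) ⦃R S : E⦄ (f : R ⟶ S),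
      p.IsStronglyCartesian f φ → r.IsStronglyCartesian f (u.map φ))
    (hvcart : ∀ ⦃a b : G⦄ (φ : a ⟶ b) ⦃R S : E⦄ (f : R ⟶ S),
      q.IsStronglyCartesian f φ → r.IsStronglyCartesian f (v.map φ))
    (huiso : IsIsofibration u) :
    (CatPullback.fst u v ⋙ p).IsFibered ∧
      ∀ S : E, ∃ Φ : Functor.Fiber (CatPullback.fst u v ⋙ p) S ⥤
          CatPullback (fiberMap u husq S) (fiberMap v hvsq S),
        Φ.IsEquivalence ∧ Function.Bijective Φ.obj := by
  subst husq hvsq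
  refine ⟨IsFibered.of_exists_isStronglyCartesian fun a _ f =>
    CatPullback.exists_isStronglyCartesian r hucart hvcart huiso a f, fun S => ?_⟩
  exact ⟨CatPullback.fiberComparison u v r S, inferInstance,
    CatPullback.fiberComparison_obj_bijective u v r S⟩

/-- The strict pullback of Grothendieck fibrations over `E` along a
cartesian isofibration is a Grothendieck fibration over `E`, whose fibre over any
`S : E` is (isomorphic to) the strict pullback of the fibre categories. -/
theorem catPullback_isFibered_and_fiber
    {E : Type w₁} {F : Type w₂} {G : Type w₃} {H : Type w₄}
    [Category.{v₁} E] [Category.{v₂} F] [Category.{v₃} G] [Category.{v₄} H]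
    {p : F ⥤ E} {q : G ⥤ E} {r : H ⥤ E}
    (u : F ⥤ H) (v : G ⥤ H) (husq : u ⋙ r = p) (hvsq : v ⋙ r = q)
    (hp : p.IsFibered) (hq : q.IsFibered) (hr : r.IsFibered)
    (hucart : ∀ ⦃a b : F⦄ (φ : a ⟶ b) ⦃R S : E⦄ (f : R ⟶ S),
      p.IsStronglyCartesian f φ → r.IsStronglyCartesian f (u.map φ))
    (hvcart : ∀ ⦃a b : G⦄ (φ : a ⟶ b) ⦃R S : E⦄ (f : R ⟶ S),
      q.IsStronglyCartesian f φ → r.IsStronglyCartesian f (v.map φ))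
    (huiso : IsIsofibration u) :
    (CatPullback.fst u v ⋙ p).IsFibered ∧
      ∀ S : E, ∃ Φ : Functor.Fiber (CatPullback.fst u v ⋙ p) S ⥤
          CatPullback (fiberMap u husq S) (fiberMap v hvsq S),
        Φ.IsEquivalence ∧ Function.Bijective Φ.obj :=
  catPullback_isFibered_and_fiber_general u v husq hvsq hp hq hucart hvcart huiso

end PaperStacks
end

section
/- In a generalized model category M with a left Bousfield localization LM: a map between objects that are fibrant in LM is a weak equivalence (respectively a fibration) in LM if and only if it is a weak equivalence (respectively a fibration) in M. -/
open CategoryTheory CategoryTheory.Limits CategoryTheory.Functor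

universe w₁ w₂ w₃ w₄ v₁ v₂ v₃ v₄

namespace PaperStacks

variable {M : Type w₁} [Category.{v₁} M]

/-
The only real work is the case of an LM-acyclic cofibration `j : X ⟶ E` between LM-fibrant
objects, which turns out to be an M-acyclic cofibration. Because `X` is LM-fibrant, `j` has a
retraction `r`. Factoring the fold map `E ⊔_X E ⟶ E` in M as a cofibration followed by an
acyclic fibration gives a cylinder on `E` relative to `X`. The map from the double into this
cylinder is an LM-acyclic cofibration, and `E` is LM-fibrant, so `r ≫ j` is homotopic to `𝟙 E`
relative to `X`. That homotopy makes `j` a retract of the end inclusion `i₀`, which is an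
M-acyclic cofibration.

For a general `f`, factor it in LM as such a `j` followed by an LM-fibration `p`. If `f` is an
LM-weak equivalence, then `p` is an LM-acyclic fibration by two-out-of-three, hence an M-acyclic
fibration. If `f` is an M-fibration, then it lifts against `j`, so `f` is a retract of `p`.
-/

namespace IsWFS

variable {L R : MorphismProperty M}

lemma llp_eq (h : IsWFS L R) : R.llp = L :=
  MorphismProperty.ext _ _ fun _ _ f => (h.llp f).symm

lemma rlp_eq (h : IsWFS L R) : L.rlp = R :=
  MorphismProperty.ext _ _ fun _ _ g => (h.rlp g).symm

lemma hasLiftingProperty (h : IsWFS L R) {A B X Y : M} {i : A ⟶ B} {p : X ⟶ Y}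
    (hi : L i) (hp : R p) : HasLiftingProperty i p :=
  (h.llp i).1 hi p hp

lemma left_isMultiplicative (h : IsWFS L R) : L.IsMultiplicative :=
  h.llp_eq ▸ inferInstance

lemma right_isMultiplicative (h : IsWFS L R) : R.IsMultiplicative :=
  h.rlp_eq ▸ inferInstance

lemma left_isStableUnderCobaseChange (h : IsWFS L R) : L.IsStableUnderCobaseChange :=
  h.llp_eq ▸ inferInstance

lemma left_isStableUnderRetracts (h : IsWFS L R) : L.IsStableUnderRetracts :=
  h.llp_eq ▸ inferInstance

lemma right_isStableUnderRetracts (h : IsWFS L R) : R.IsStableUnderRetracts :=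
  h.rlp_eq ▸ inferInstance

lemma fibrant_of_comp (h : IsWFS L R) {Z Y : M} {p : Z ⟶ Y} (hp : R p) (hY : Fibrant R Y) :
    Fibrant R Z := by
  obtain ⟨T, hT, hY⟩ := hY
  have := h.right_isMultiplicative
  exact ⟨T, hT, (hT.hom_ext _ _ : p ≫ hT.from Y = hT.from Z) ▸ R.comp_mem p _ hp hY⟩

lemma exists_extension_of_fibrant (h : IsWFS L R) {E A B : M} (hE : Fibrant R E)
    {w : A ⟶ B} (hw : L w) (φ : A ⟶ E) : ∃ H : B ⟶ E, w ≫ H = φ := by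
  obtain ⟨T, hT, hE⟩ := hE
  have := h.hasLiftingProperty hw hE
  have sq : CommSq φ w (hT.from E) (hT.from B) := ⟨hT.hom_ext _ _⟩
  exact ⟨sq.lift, sq.fac_left⟩

end IsWFS

def retractArrowOfHomotopy {X E Cyl : M} {j : X ⟶ E} {r : E ⟶ X} {i₀ i₁ : E ⟶ Cyl}
    {H : Cyl ⟶ E} (hjr : j ≫ r = 𝟙 X) (hi : j ≫ i₀ = j ≫ i₁) (hH₀ : i₀ ≫ H = r ≫ j)
    (hH₁ : i₁ ≫ H = 𝟙 E) : RetractArrow j i₀ where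
  i := Arrow.homMk j i₁ hi
  r := Arrow.homMk r H hH₀.symm
  retract := by ext <;> simp [hjr, hH₁]

namespace IsGMC

variable {W C F W' F' : MorphismProperty M}

lemma id_mem (hM : IsGMC W C F) (X : M) : W (𝟙 X) :=
  have := hM.wfs₂.left_isMultiplicative
  ((C ⊓ W).id_mem X).2

lemma exists_cylinder_rel (hM : IsGMC W C F) (hLM : IsGMC W' C F') (hWW' : W ≤ W')
    {X E : M} {j : X ⟶ E} (hj : (C ⊓ W') j) :
    ∃ (Cyl : M) (i₀ i₁ : E ⟶ Cyl), j ≫ i₀ = j ≫ i₁ ∧ (C ⊓ W) i₀ ∧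
      ∀ ⦃E' : M⦄, Fibrant F' E' → ∀ a b : E ⟶ E', j ≫ a = j ≫ b →
        ∃ H : Cyl ⟶ E', i₀ ≫ H = a ∧ i₁ ≫ H = b := by
  have := hM.pushoutCof j j hj.1
  have := hLM.wfs₂.left_isStableUnderCobaseChange
  have := hM.wfs₁.left_isMultiplicative
  have := hM.twoOutOfThree
  have := hLM.twoOutOfThree
  have hinl : (C ⊓ W') (pushout.inl j j) :=
    MorphismProperty.of_isPushout (IsPushout.of_hasPushout j j) hj
  obtain ⟨Cyl, w, q, hw, hq, hwq⟩ :=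
    hM.wfs₁.fact (pushout.desc (f := j) (g := j) (𝟙 E) (𝟙 E) rfl)
  have hi₀q : (pushout.inl j j ≫ w) ≫ q = 𝟙 E := by
    rw [Category.assoc, hwq, pushout.inl_desc]
  have hi₀W : W (pushout.inl j j ≫ w) := W.of_postcomp _ q hq.2 (hi₀q ▸ hM.id_mem E)
  have hwW' : W' w := W'.of_precomp _ w hinl.2 (hWW' _ hi₀W)
  refine ⟨Cyl, pushout.inl j j ≫ w, pushout.inr j j ≫ w,
    by simp [pushout.condition_assoc], ⟨C.comp_mem _ _ hinl.1 hw, hi₀W⟩, fun E' hE' a b hab => ?_⟩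
  obtain ⟨H, hH⟩ :=
    hLM.wfs₂.exists_extension_of_fibrant hE' ⟨hw, hwW'⟩ (pushout.desc a b hab)
  exact ⟨H, by rw [Category.assoc, hH, pushout.inl_desc],
    by rw [Category.assoc, hH, pushout.inr_desc]⟩

lemma acyclicCofibration_of_local_of_fibrant (hM : IsGMC W C F) (hLM : IsGMC W' C F')
    (hWW' : W ≤ W') {X E : M} {j : X ⟶ E} (hj : (C ⊓ W') j) (hX : Fibrant F' X)
    (hE : Fibrant F' E) : (C ⊓ W) j := by
  obtain ⟨r, hjr⟩ := hLM.wfs₂.exists_extension_of_fibrant hX hj (𝟙 X)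
  obtain ⟨Cyl, i₀, i₁, hi, hi₀, hext⟩ := exists_cylinder_rel hM hLM hWW' hj
  obtain ⟨H, hH₀, hH₁⟩ := hext hE (r ≫ j) (𝟙 E) (by simp [reassoc_of% hjr])
  have := hM.wfs₂.left_isStableUnderRetracts
  exact MorphismProperty.of_retract (retractArrowOfHomotopy hjr hi hH₀ hH₁) hi₀

lemma local_fibration_le (hM : IsGMC W C F) (hLM : IsGMC W' C F') (hWW' : W ≤ W') :
    F' ≤ F := by
  rw [← hM.wfs₂.rlp_eq, ← hLM.wfs₂.rlp_eq]
  exact MorphismProperty.antitone_rlp (inf_le_inf_left C hWW')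

end IsGMC

/-- In a left Bousfield localization `LM` of a generalized model category
`M`, a map between `LM`-fibrant objects is a weak equivalence (resp. fibration) in `LM`
if and only if it is one in `M`. -/
theorem localization_weakEquivalence_and_fibration_between_local_fibrant
    {W C F : MorphismProperty M} (hM : IsGMC W C F)
    {W' F' : MorphismProperty M} (hLM : IsGMC W' C F') (hWW' : W ≤ W')
    {X Y : M} (f : X ⟶ Y) (hX : Fibrant F' X) (hY : Fibrant F' Y) :
    (W' f ↔ W f) ∧ (F' f ↔ F f) := by
  obtain ⟨Z, i, p, hi, hp, rfl⟩ := hLM.wfs₂.fact f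
  have hiW : (C ⊓ W) i := hM.acyclicCofibration_of_local_of_fibrant hLM hWW' hi hX
    (hLM.wfs₂.fibrant_of_comp hp hY)
  have := hM.twoOutOfThree
  have := hLM.twoOutOfThree
  refine ⟨⟨fun hf => ?_, hWW' _⟩, ⟨hM.local_fibration_le hLM hWW' _, fun hf => ?_⟩⟩
  · have hpW : (F ⊓ W) p := by
      -- both acyclic-fibration classes are `C.rlp`
      rw [← hM.wfs₁.rlp_eq, hLM.wfs₁.rlp_eq]
      exact ⟨hp, W'.of_precomp i p hi.2 hf⟩
    exact W.comp_mem i p hiW.2 hpW.2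
  · have := hM.wfs₂.hasLiftingProperty hiW hf
    have := hLM.wfs₂.right_isStableUnderRetracts
    exact MorphismProperty.of_retract (RetractArrow.ofRightLiftingProperty rfl) hp

end PaperStacks
end

section
/- In a generalized model category M with left Bousfield localization LM and a weak equivalence f : X ⟶ Y in M between objects X, Y fibrant in M: X is fibrant in LM if and only if Y is fibrant in LM. -/
open CategoryTheory CategoryTheory.Limits CategoryTheory.Functor

universe w₁ w₂ w₃ w₄ v₁ v₂ v₃ v₄

namespace PaperStacks

variable {M : Type w₁} [Category.{v₁} M]

section Statement18Aux


/-- Lifting properties transfer along pullbacks: if `snd` is a pullback of `f`,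
then any `j` with the left lifting property against `f` also lifts against `snd`. -/
lemma hasLiftingProperty_of_isPullback {A B P X Y Z : M} (j : A ⟶ B)
    {fst : P ⟶ X} {snd : P ⟶ Y} {f : X ⟶ Z} {g : Y ⟶ Z} (hP : IsPullback fst snd f g)
    (h : HasLiftingProperty j f) : HasLiftingProperty j snd := by
  constructor
  intro u v sq
  haveI := h
  have sq2 : CommSq (u ≫ fst) j f (v ≫ g) :=
    ⟨by rw [Category.assoc, hP.w, ← Category.assoc, sq.w, Category.assoc]⟩
  refine ⟨⟨⟨hP.lift sq2.lift v sq2.fac_right, ?_, hP.lift_snd _ _ _⟩⟩⟩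
  apply hP.hom_ext
  · rw [Category.assoc, hP.lift_fst, sq2.fac_left]
  · rw [Category.assoc, hP.lift_snd, sq.w]

/-- A map to a terminal object has the RLP against `j` as soon as all maps extend. -/
lemma hasLiftingProperty_to_terminal {A B X T : M} (hT : IsTerminal T) (j : A ⟶ B)
    (tX : X ⟶ T) (h : ∀ u : A ⟶ X, ∃ l : B ⟶ X, j ≫ l = u) :
    HasLiftingProperty j tX := by
  constructor
  intro u v sq
  obtain ⟨l, hl⟩ := h u
  exact ⟨⟨⟨l, hl, hT.hom_ext _ _⟩⟩⟩

/-- The extension property of an object against a class of maps. -/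
def ExtAll (L : MorphismProperty M) (X : M) : Prop :=
  ∀ ⦃A B : M⦄ (j : A ⟶ B), L j → ∀ u : A ⟶ X, ∃ l : B ⟶ X, j ≫ l = u

lemma ExtAll.mono {L L' : MorphismProperty M} (h : L ≤ L') {X : M}
    (hX : ExtAll L' X) : ExtAll L X := fun _ _ j hj u => hX j (h _ hj) u

lemma fibrant_iff_extAll {L R : MorphismProperty M} (hwfs : IsWFS L R)
    (hTerm : HasTerminal M) {X : M} : Fibrant R X ↔ ExtAll L X := by
  constructor
  · rintro ⟨T, hT, hF⟩ A B j hj u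
    haveI := (hwfs.rlp _).mp hF j hj
    have sq : CommSq u j (hT.from X) (hT.from B) := ⟨hT.hom_ext _ _⟩
    exact ⟨sq.lift, sq.fac_left⟩
  · intro hX
    haveI := hTerm
    refine ⟨⊤_ M, terminalIsTerminal, (hwfs.rlp _).mpr ?_⟩
    intro A B j hj
    exact hasLiftingProperty_to_terminal terminalIsTerminal j _ (hX j hj)

lemma ExtAll.of_fib {L R : MorphismProperty M} (hwfs : IsWFS L R) {Z Y : M}
    (p : Z ⟶ Y) (hp : R p) (hY : ExtAll L Y) : ExtAll L Z := by
  intro A B j hj u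
  obtain ⟨b, hb⟩ := hY j hj (u ≫ p)
  haveI := (hwfs.llp j).mp hj p hp
  have sq : CommSq u j p b := ⟨hb.symm⟩
  exact ⟨sq.lift, sq.fac_left⟩

variable {W C F W' F' : MorphismProperty M}

/-- Key homotopy lemma: a trivial cofibration `i : U ⟶ E` with `U` LM-fibrant and
`E` M-fibrant has LM-fibrant target. -/
lemma extAll_of_trivCof (hM : IsGMC W C F) (hWW' : W ≤ W')
    {U E : M} (i : U ⟶ E) (hi : (C ⊓ W) i)
    (hU : ExtAll (C ⊓ W') U) (hE : ExtAll (C ⊓ W) E) : ExtAll (C ⊓ W') E := by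
  haveI := hM.hasTerminal
  haveI := hM.twoOutOfThree
  -- E is M-fibrant
  have hFtE : F (terminal.from E) := (hM.wfs₂.rlp _).mpr
    (fun A B j hj => hasLiftingProperty_to_terminal terminalIsTerminal j _ (hE j hj))
  haveI : HasPullback (terminal.from E) (terminal.from E) := hM.pullbackFib _ _ hFtE
  have hPB := IsPullback.of_hasPullback (terminal.from E) (terminal.from E)
  set fst := pullback.fst (terminal.from E) (terminal.from E) with hfst
  set snd := pullback.snd (terminal.from E) (terminal.from E) with hsnd
  have hFfst : F fst := (hM.wfs₂.rlp _).mpr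
    (fun A B j hj => hasLiftingProperty_of_isPullback j hPB.flip
      ((hM.wfs₂.rlp _).mp hFtE j hj))
  -- path object on E
  obtain ⟨PE, σ, π, hσ, hπ, hfacΔ⟩ := hM.wfs₂.fact (hPB.lift (𝟙 E) (𝟙 E) rfl)
  have hid : ∀ (X : M), W (𝟙 X) := fun X =>
    ((hM.wfs₁.rlp _).mpr (fun A B j hj => inferInstance)).2
  have hσq0 : σ ≫ (π ≫ fst) = 𝟙 E := by
    rw [← Category.assoc, hfacΔ, hPB.lift_fst]
  have hσq1 : σ ≫ (π ≫ snd) = 𝟙 E := by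
    rw [← Category.assoc, hfacΔ, hPB.lift_snd]
  have hWq0 : W (π ≫ fst) := W.of_precomp σ _ hσ.2 (by rw [hσq0]; exact hid E)
  have hFq0 : F (π ≫ fst) := (hM.wfs₂.rlp _).mpr (fun A B j hj => by
    haveI := (hM.wfs₂.rlp _).mp hπ j hj
    haveI := (hM.wfs₂.rlp _).mp hFfst j hj
    infer_instance)
  -- retraction of i
  obtain ⟨r, hr⟩ := hU i ⟨hi.1, hWW' _ hi.2⟩ (𝟙 U)
  -- the homotopy H : E ⟶ PE from r ≫ i to the identity
  have hbot : (r ≫ i) ≫ terminal.from E = (𝟙 E) ≫ terminal.from E :=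
    terminalIsTerminal.hom_ext _ _
  have hri : i ≫ (r ≫ i) = i := by rw [← Category.assoc, hr, Category.id_comp]
  have sqH : CommSq (i ≫ σ) i π (hPB.lift (r ≫ i) (𝟙 E) hbot) := by
    refine ⟨?_⟩
    rw [Category.assoc, hfacΔ]
    apply hPB.hom_ext
    · simp only [Category.assoc, hPB.lift_fst, Category.comp_id, hri]
    · simp only [Category.assoc, hPB.lift_snd, Category.comp_id]
  haveI := (hM.wfs₂.llp i).mp hi π hπ
  -- final extension argument
  intro A B j hj u
  obtain ⟨ℓ, hℓ⟩ := hU j hj (u ≫ r)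
  haveI := (hM.wfs₁.llp j).mp hj.1 (π ≫ fst) ⟨hFq0, hWq0⟩
  have sq2 : CommSq (u ≫ sqH.lift) j (π ≫ fst) (ℓ ≫ i) := by
    refine ⟨?_⟩
    rw [Category.assoc, ← Category.assoc sqH.lift, sqH.fac_right, hPB.lift_fst,
      ← Category.assoc, ← Category.assoc, hℓ]
  refine ⟨sq2.lift ≫ (π ≫ snd), ?_⟩
  rw [← Category.assoc, sq2.fac_left, Category.assoc,
    ← Category.assoc sqH.lift, sqH.fac_right, hPB.lift_snd, Category.comp_id]

/-- Key lemma: an M-fibration which is an LM-weak equivalence between LM-fibrant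
objects is an LM-fibration. -/
lemma fib_mem_localFib (hM : IsGMC W C F) (hLM : IsGMC W' C F') (hWW' : W ≤ W')
    {G RY : M} (q : G ⟶ RY) (hqF : F q) (hqW' : W' q)
    (hG : ExtAll (C ⊓ W') G) (hRY : ExtAll (C ⊓ W') RY) : F' q := by
  haveI := hM.hasTerminal
  haveI := hM.twoOutOfThree
  haveI := hLM.twoOutOfThree
  -- RY is LM-fibrant
  have hF'tR : F' (terminal.from RY) := (hLM.wfs₂.rlp _).mpr
    (fun A B j hj => hasLiftingProperty_to_terminal terminalIsTerminal j _ (hRY j hj))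
  haveI : HasPullback (terminal.from RY) (terminal.from RY) := hLM.pullbackFib _ _ hF'tR
  have hPB := IsPullback.of_hasPullback (terminal.from RY) (terminal.from RY)
  set fst := pullback.fst (terminal.from RY) (terminal.from RY) with hfstd
  set snd := pullback.snd (terminal.from RY) (terminal.from RY) with hsndd
  have hF'fst : F' fst := (hLM.wfs₂.rlp _).mpr
    (fun A B j hj => hasLiftingProperty_of_isPullback j hPB.flip
      ((hLM.wfs₂.rlp _).mp hF'tR j hj))
  -- an LM-path object on RY
  obtain ⟨PR, σ', π', hσ', hπ', hfacΔ⟩ := hLM.wfs₂.fact (hPB.lift (𝟙 RY) (𝟙 RY) rfl)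
  have hid : ∀ (X : M), W (𝟙 X) := fun X =>
    ((hM.wfs₁.rlp _).mpr (fun A B j hj => inferInstance)).2
  have hid' : ∀ (X : M), W' (𝟙 X) := fun X =>
    ((hLM.wfs₁.rlp _).mpr (fun A B j hj => inferInstance)).2
  have hσq0 : σ' ≫ (π' ≫ fst) = 𝟙 RY := by rw [← Category.assoc, hfacΔ, hPB.lift_fst]
  have hσq1 : σ' ≫ (π' ≫ snd) = 𝟙 RY := by rw [← Category.assoc, hfacΔ, hPB.lift_snd]
  have hW'q0 : W' (π' ≫ fst) := W'.of_precomp σ' _ hσ'.2 (by rw [hσq0]; exact hid' RY)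
  have hF'q0 : F' (π' ≫ fst) := (hLM.wfs₂.rlp _).mpr (fun A B j hj => by
    haveI := (hLM.wfs₂.rlp _).mp hπ' j hj
    haveI := (hLM.wfs₂.rlp _).mp hF'fst j hj
    infer_instance)
  -- the first endpoint evaluation is a trivial fibration in M as well
  have hFWq0 : (F ⊓ W) (π' ≫ fst) := (hM.wfs₁.rlp _).mpr
    (fun A B j hj => (hLM.wfs₁.rlp _).mp ⟨hF'q0, hW'q0⟩ j hj)
  -- pullback R of q along the first endpoint evaluation
  haveI : HasPullback (π' ≫ fst) q := hM.pullbackFib q (π' ≫ fst) hqF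
  have hR := IsPullback.of_hasPullback (π' ≫ fst) q
  set Rfst := pullback.fst (π' ≫ fst) q with hRfstd
  set Rsnd := pullback.snd (π' ≫ fst) q with hRsndd
  have hFWRsnd : (F ⊓ W) Rsnd := (hM.wfs₁.rlp _).mpr
    (fun A B j hj => hasLiftingProperty_of_isPullback j hR ((hM.wfs₁.rlp _).mp hFWq0 j hj))
  -- the "constant homotopy" map Φ : G ⟶ R
  have hΦw : (q ≫ σ') ≫ (π' ≫ fst) = (𝟙 G) ≫ q := by
    rw [Category.assoc, hσq0, Category.comp_id, Category.id_comp]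
  obtain ⟨Φ, hΦ1, hΦ2⟩ : ∃ Φ : G ⟶ pullback (π' ≫ fst) q,
      Φ ≫ Rfst = q ≫ σ' ∧ Φ ≫ Rsnd = 𝟙 G :=
    ⟨hR.lift (q ≫ σ') (𝟙 G) hΦw, hR.lift_fst _ _ _, hR.lift_snd _ _ _⟩
  have hWΦ : W Φ := W.of_postcomp Φ Rsnd hFWRsnd.2 (by rw [hΦ2]; exact hid G)
  obtain ⟨R₄, c₄, q₄, hc₄, hq₄F, hfacΦ⟩ := hM.wfs₂.fact Φ
  have hWq₄ : W q₄ := W.of_precomp c₄ q₄ hc₄.2 (by rw [hfacΦ]; exact hWΦ)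
  -- now establish the RLP against all LM-trivial cofibrations
  refine (hLM.wfs₂.rlp _).mpr ?_
  intro A B j hj
  constructor
  intro u v sq
  obtain ⟨ℓ₁, hℓ₁⟩ := hG j hj u
  -- the homotopy Ĥ between ℓ₁ ≫ q and v rel j
  haveI := (hLM.wfs₂.llp j).mp hj π' hπ'
  have hbotw : (ℓ₁ ≫ q) ≫ terminal.from RY = v ≫ terminal.from RY :=
    terminalIsTerminal.hom_ext _ _
  have sqb : CommSq (u ≫ q ≫ σ') j π' (hPB.lift (ℓ₁ ≫ q) v hbotw) := by
    refine ⟨?_⟩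
    apply hPB.hom_ext
    · simp only [Category.assoc, hσq0, Category.comp_id, hPB.lift_fst]
      rw [← Category.assoc, hℓ₁]
    · simp only [Category.assoc, hσq1, Category.comp_id, hPB.lift_snd]
      exact sq.w
  have hHq0 : sqb.lift ≫ (π' ≫ fst) = ℓ₁ ≫ q := by
    rw [← Category.assoc, sqb.fac_right, hPB.lift_fst]
  have hHq1 : sqb.lift ≫ (π' ≫ snd) = v := by
    rw [← Category.assoc, sqb.fac_right, hPB.lift_snd]
  obtain ⟨β, hβ1, hβ2⟩ : ∃ β : B ⟶ pullback (π' ≫ fst) q,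
      β ≫ Rfst = sqb.lift ∧ β ≫ Rsnd = ℓ₁ :=
    ⟨hR.lift sqb.lift ℓ₁ hHq0, hR.lift_fst _ _ _, hR.lift_snd _ _ _⟩
  haveI := (hM.wfs₁.llp j).mp hj.1 q₄ ⟨hq₄F, hWq₄⟩
  have sqc : CommSq (u ≫ c₄) j q₄ β := by
    refine ⟨?_⟩
    rw [Category.assoc, hfacΦ]
    apply hR.hom_ext
    · rw [Category.assoc, Category.assoc, hΦ1, hβ1, sqb.fac_left]
    · rw [Category.assoc, Category.assoc, hΦ2, hβ2, Category.comp_id, hℓ₁]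
  haveI := (hM.wfs₂.llp c₄).mp hc₄ q hqF
  have sqd : CommSq (𝟙 G) c₄ q (q₄ ≫ Rfst ≫ (π' ≫ snd)) := by
    refine ⟨?_⟩
    rw [Category.id_comp, ← Category.assoc, hfacΦ, ← Category.assoc, hΦ1,
      Category.assoc, hσq1, Category.comp_id]
  refine ⟨⟨⟨sqc.lift ≫ sqd.lift, ?_, ?_⟩⟩⟩
  · rw [← Category.assoc, sqc.fac_left, Category.assoc, sqd.fac_left, Category.comp_id]
  · rw [Category.assoc, sqd.fac_right, ← Category.assoc, sqc.fac_right,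
      ← Category.assoc, hβ1, hHq1]

end Statement18Aux

/-- Given a left Bousfield localization `LM` of a generalized model
category `M` and a weak equivalence `f : X ⟶ Y` in `M` between objects fibrant in `M`,
`X` is fibrant in `LM` if and only if `Y` is fibrant in `LM`. -/
theorem local_fibrant_iff_of_weakEquivalence
    {W C F : MorphismProperty M} (hM : IsGMC W C F)
    {W' F' : MorphismProperty M} (hLM : IsGMC W' C F') (hWW' : W ≤ W')
    {X Y : M} (f : X ⟶ Y) (hf : W f) (hX : Fibrant F X) (hY : Fibrant F Y) :
    Fibrant F' X ↔ Fibrant F' Y := by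
  haveI := hM.hasTerminal
  haveI := hM.twoOutOfThree
  haveI := hLM.twoOutOfThree
  have eX : ExtAll (C ⊓ W) X := (fibrant_iff_extAll hM.wfs₂ hM.hasTerminal).mp hX
  have eY : ExtAll (C ⊓ W) Y := (fibrant_iff_extAll hM.wfs₂ hM.hasTerminal).mp hY
  obtain ⟨Z, i, p, hiC, hpFW, hfac⟩ := hM.wfs₁.fact f
  have hWi : W i := W.of_postcomp i p hpFW.2 (by rw [hfac]; exact hf)
  have hF'W'p : (F' ⊓ W') p := (hLM.wfs₁.rlp _).mpr
    (fun A B j hj => (hM.wfs₁.rlp _).mp hpFW j hj)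
  constructor
  · intro hX'
    have eX' : ExtAll (C ⊓ W') X := (fibrant_iff_extAll hLM.wfs₂ hM.hasTerminal).mp hX'
    have eZ : ExtAll (C ⊓ W) Z := ExtAll.of_fib hM.wfs₂ p hpFW.1 eY
    have eZ' : ExtAll (C ⊓ W') Z := extAll_of_trivCof hM hWW' i ⟨hiC, hWi⟩ eX' eZ
    -- LM fibrant replacement of Y
    obtain ⟨RY, k, t, hk, htF', hfact⟩ := hLM.wfs₂.fact (terminal.from Y)
    have eRY' : ExtAll (C ⊓ W') RY := by
      intro A B j hj u
      haveI := (hLM.wfs₂.llp j).mp hj t htF'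
      have sq : CommSq u j t (terminal.from B) := ⟨terminalIsTerminal.hom_ext _ _⟩
      exact ⟨sq.lift, sq.fac_left⟩
    obtain ⟨G, i₃, q₃, hi₃, hq₃F, hfacg⟩ := hM.wfs₂.fact (p ≫ k)
    have eRY : ExtAll (C ⊓ W) RY :=
      ExtAll.mono (fun _ _ g hg => ⟨hg.1, hWW' _ hg.2⟩) eRY'
    have eG : ExtAll (C ⊓ W) G := ExtAll.of_fib hM.wfs₂ q₃ hq₃F eRY
    have eG' : ExtAll (C ⊓ W') G := extAll_of_trivCof hM hWW' i₃ hi₃ eZ' eG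
    have hW'q₃ : W' q₃ := W'.of_precomp i₃ q₃ (hWW' _ hi₃.2)
      (by rw [hfacg]; exact W'.comp_mem p k (hWW' _ hpFW.2) hk.2)
    have hF'q₃ : F' q₃ := fib_mem_localFib hM hLM hWW' q₃ hq₃F hW'q₃ eG' eRY'
    have hFWq₃ : (F ⊓ W) q₃ := (hM.wfs₁.rlp _).mpr
      (fun A B j hj => (hLM.wfs₁.rlp _).mp ⟨hF'q₃, hW'q₃⟩ j hj)
    have hWpk : W (p ≫ k) := by
      rw [← hfacg]; exact W.comp_mem i₃ q₃ hi₃.2 hFWq₃.2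
    have hWk : W k := W.of_precomp p k hpFW.2 hWpk
    obtain ⟨ρ, hρ⟩ := eY k ⟨hk.1, hWk⟩ (𝟙 Y)
    refine (fibrant_iff_extAll hLM.wfs₂ hM.hasTerminal).mpr ?_
    intro A B j hj u
    obtain ⟨ℓ, hℓ⟩ := eRY' j hj (u ≫ k)
    refine ⟨ℓ ≫ ρ, ?_⟩
    rw [← Category.assoc, hℓ, Category.assoc, hρ, Category.comp_id]
  · intro hY'
    have eY' : ExtAll (C ⊓ W') Y := (fibrant_iff_extAll hLM.wfs₂ hM.hasTerminal).mp hY'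
    have eZ' : ExtAll (C ⊓ W') Z := ExtAll.of_fib hLM.wfs₂ p hF'W'p.1 eY'
    obtain ⟨r, hr⟩ := eX i ⟨hiC, hWi⟩ (𝟙 X)
    refine (fibrant_iff_extAll hLM.wfs₂ hM.hasTerminal).mpr ?_
    intro A B j hj u
    obtain ⟨ℓ, hℓ⟩ := eZ' j hj (u ≫ i)
    refine ⟨ℓ ≫ r, ?_⟩
    rw [← Category.assoc, hℓ, Category.assoc, hr, Category.comp_id]


end PaperStacks
end
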